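/- arXiv:2309.01758 — 12 statements merged into one kernel-verified Lean document; each statement's English description precedes it below -/
import Mathlib

section
/- Let (A, μ) be an associative algebra and α, β : A → A commuting algebra endomorphisms. Then (A, μ∘(α⊗β), α, β) is a BiHom-associative algebra, i.e. α(a)·(b·c) = (a·b)·β(c) for the new product a·b = α(a)β(b). -/
open TensorProduct

noncomputable section

variable (K : Type*) [Field K] (A : Type*) [AddCommGroup A] [Module K A]
variable (M : Type*) [AddCommGroup M] [Module K M]

/-- BiHom-associative algebra axioms for `(A, μ, α, β)`. -/
def BiHomAssoc (μ : A ⊗[K] A →ₗ[K] A) (α β : A →ₗ[K] A) : Prop :=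
  α ∘ₗ β = β ∘ₗ α ∧
  (∀ a b : A, α (μ (a ⊗ₜ[K] b)) = μ (α a ⊗ₜ[K] α b)) ∧
  (∀ a b : A, β (μ (a ⊗ₜ[K] b)) = μ (β a ⊗ₜ[K] β b)) ∧
  (∀ a b c : A, μ (α a ⊗ₜ[K] μ (b ⊗ₜ[K] c)) = μ (μ (a ⊗ₜ[K] b) ⊗ₜ[K] β c))

/-- BiHom-coassociative coalgebra axioms for `(A, Δ, ψ, ω)`. -/
def BiHomCoassoc (Δ : A →ₗ[K] A ⊗[K] A) (ψ ω : A →ₗ[K] A) : Prop :=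
  ψ ∘ₗ ω = ω ∘ₗ ψ ∧
  (TensorProduct.map ψ ψ ∘ₗ Δ = Δ ∘ₗ ψ) ∧
  (TensorProduct.map ω ω ∘ₗ Δ = Δ ∘ₗ ω) ∧
  ((TensorProduct.assoc K A A A).toLinearMap ∘ₗ TensorProduct.map Δ ψ ∘ₗ Δ
    = TensorProduct.map ω Δ ∘ₗ Δ)

/-- The compatibility condition of a `λ`-infinitesimal BiHom-bialgebra:
`Δ(ab) = ω(a)b₁ ⊗ β(b₂) + α(a₁) ⊗ a₂ψ(b) + λ (αω(a) ⊗ βψ(b))`. -/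
def InfBHCompat (lam : K) (μ : A ⊗[K] A →ₗ[K] A) (Δ : A →ₗ[K] A ⊗[K] A)
    (α β ψ ω : A →ₗ[K] A) : Prop :=
  ∀ a b : A, Δ (μ (a ⊗ₜ[K] b)) =
    TensorProduct.map μ β ((TensorProduct.assoc K A A A).symm (ω a ⊗ₜ[K] Δ b))
    + TensorProduct.map α μ ((TensorProduct.assoc K A A A) (Δ a ⊗ₜ[K] ψ b))
    + lam • (α (ω a) ⊗ₜ[K] β (ψ b))

/-- `λ`-infinitesimal BiHom-bialgebra. -/
def IsInfBH (lam : K) (μ : A ⊗[K] A →ₗ[K] A) (Δ : A →ₗ[K] A ⊗[K] A)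
    (α β ψ ω : A →ₗ[K] A) : Prop :=
  BiHomAssoc K A μ α β ∧ BiHomCoassoc K A Δ ψ ω ∧
  α ∘ₗ ψ = ψ ∘ₗ α ∧ α ∘ₗ ω = ω ∘ₗ α ∧ β ∘ₗ ψ = ψ ∘ₗ β ∧ β ∘ₗ ω = ω ∘ₗ β ∧
  (TensorProduct.map α α ∘ₗ Δ = Δ ∘ₗ α) ∧
  (TensorProduct.map β β ∘ₗ Δ = Δ ∘ₗ β) ∧
  (ψ ∘ₗ μ = μ ∘ₗ TensorProduct.map ψ ψ) ∧
  (ω ∘ₗ μ = μ ∘ₗ TensorProduct.map ω ω) ∧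
  InfBHCompat K A lam μ Δ α β ψ ω

/-- Unit axioms for a unitary `λ`-infBH-bialgebra (or unitary BiHom-algebra). -/
def IsUnitBH (μ : A ⊗[K] A →ₗ[K] A) (α β ψ ω : A →ₗ[K] A) (e : A) : Prop :=
  α e = e ∧ β e = e ∧ ψ e = e ∧ ω e = e ∧
  (∀ a : A, μ (a ⊗ₜ[K] e) = α a) ∧ (∀ a : A, μ (e ⊗ₜ[K] a) = β a)

/-- Counit axioms for a counitary `λ`-infBH-bialgebra. -/
def IsCounitBH (Δ : A →ₗ[K] A ⊗[K] A) (α β ψ ω : A →ₗ[K] A) (ε : A →ₗ[K] K) : Prop :=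
  ε ∘ₗ α = ε ∧ ε ∘ₗ β = ε ∧ ε ∘ₗ ψ = ε ∧ ε ∘ₗ ω = ε ∧
  ((TensorProduct.rid K A).toLinearMap ∘ₗ TensorProduct.map LinearMap.id ε ∘ₗ Δ = ω) ∧
  ((TensorProduct.lid K A).toLinearMap ∘ₗ TensorProduct.map ε LinearMap.id ∘ₗ Δ = ψ)

/-- Left BiHom-module axioms. -/
def IsLeftBiHomModule (μ : A ⊗[K] A →ₗ[K] A) (α β : A →ₗ[K] A)
    (γ : A ⊗[K] M →ₗ[K] M) (αM βM : M →ₗ[K] M) : Prop :=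
  αM ∘ₗ βM = βM ∘ₗ αM ∧
  (∀ (a : A) (m : M), αM (γ (a ⊗ₜ[K] m)) = γ (α a ⊗ₜ[K] αM m)) ∧
  (∀ (a : A) (m : M), βM (γ (a ⊗ₜ[K] m)) = γ (β a ⊗ₜ[K] βM m)) ∧
  (∀ (a a' : A) (m : M),
    γ (α a ⊗ₜ[K] γ (a' ⊗ₜ[K] m)) = γ (μ (a ⊗ₜ[K] a') ⊗ₜ[K] βM m))

/-- Left BiHom-comodule axioms. -/
def IsLeftBiHomComodule (Δ : A →ₗ[K] A ⊗[K] A) (ψ ω : A →ₗ[K] A)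
    (ρ : M →ₗ[K] A ⊗[K] M) (ψM ωM : M →ₗ[K] M) : Prop :=
  ψM ∘ₗ ωM = ωM ∘ₗ ψM ∧
  (TensorProduct.map ψ ψM ∘ₗ ρ = ρ ∘ₗ ψM) ∧
  (TensorProduct.map ω ωM ∘ₗ ρ = ρ ∘ₗ ωM) ∧
  ((TensorProduct.assoc K A A M).toLinearMap ∘ₗ TensorProduct.map Δ ψM ∘ₗ ρ
    = TensorProduct.map ω ρ ∘ₗ ρ)

/-- Left `λ`-infBH-Hopf module over a `λ`-infBH-bialgebra. -/
def IsInfBHHopfModule (lam : K) (μ : A ⊗[K] A →ₗ[K] A) (Δ : A →ₗ[K] A ⊗[K] A)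
    (α β ψ ω : A →ₗ[K] A) (γ : A ⊗[K] M →ₗ[K] M) (ρ : M →ₗ[K] A ⊗[K] M)
    (αM βM ψM ωM : M →ₗ[K] M) : Prop :=
  IsLeftBiHomModule K A M μ α β γ αM βM ∧
  IsLeftBiHomComodule K A M Δ ψ ω ρ ψM ωM ∧
  αM ∘ₗ ψM = ψM ∘ₗ αM ∧ αM ∘ₗ ωM = ωM ∘ₗ αM ∧
  βM ∘ₗ ψM = ψM ∘ₗ βM ∧ βM ∘ₗ ωM = ωM ∘ₗ βM ∧
  ∀ (a : A) (m : M), ρ (γ (a ⊗ₜ[K] m)) =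
    TensorProduct.map μ βM ((TensorProduct.assoc K A A M).symm (ω a ⊗ₜ[K] ρ m))
    + TensorProduct.map α γ ((TensorProduct.assoc K A A M) (Δ a ⊗ₜ[K] ψM m))
    + lam • (α (ω a) ⊗ₜ[K] βM (ψM m))

/-- Yau twist of an associative algebra is BiHom-associative. -/
theorem yau_twist_biHomAssoc
    (K : Type*) [Field K] (A : Type*) [AddCommGroup A] [Module K A]
    (μ : A ⊗[K] A →ₗ[K] A) (α β : A →ₗ[K] A)
    (hassoc : ∀ a b c : A, μ (a ⊗ₜ[K] μ (b ⊗ₜ[K] c)) = μ (μ (a ⊗ₜ[K] b) ⊗ₜ[K] c))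
    (hα : ∀ a b : A, α (μ (a ⊗ₜ[K] b)) = μ (α a ⊗ₜ[K] α b))
    (hβ : ∀ a b : A, β (μ (a ⊗ₜ[K] b)) = μ (β a ⊗ₜ[K] β b))
    (hcomm : α ∘ₗ β = β ∘ₗ α) :
    BiHomAssoc K A (μ ∘ₗ TensorProduct.map α β) α β := by
  have hc : ∀ x : A, α (β x) = β (α x) := fun x => LinearMap.congr_fun hcomm x
  refine ⟨hcomm, ?_, ?_, ?_⟩
  · intro a b
    simp only [LinearMap.comp_apply, TensorProduct.map_tmul, hα]
    rw [hc]
  · intro a b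
    simp only [LinearMap.comp_apply, TensorProduct.map_tmul, hβ]
    rw [hc]
  · intro a b c
    simp only [LinearMap.comp_apply, TensorProduct.map_tmul, hα, hβ, hassoc, hc]
end
end

section
/- Let (A, μ, Δ) be a λ-infinitesimal bialgebra (i.e. (A,μ) associative, (A,Δ) coassociative, and Δ(ab) = aΔ(b) + Δ(a)b + λ(a⊗b), where A⊗A carries the standard bimodule structure) and let α, β, ψ, ω : A → A be pairwise commuting maps that are simultaneously algebra and coalgebra morphisms. Then (A, μ∘(α⊗β), (ω⊗ψ)∘Δ, α, β, ψ, ω) is a λ-infinitesimal BiHom-bialgebra. -/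
open TensorProduct

noncomputable section

variable (K : Type*) [Field K] (A : Type*) [AddCommGroup A] [Module K A]
variable (M : Type*) [AddCommGroup M] [Module K M]

/-- Yau twist of a `λ`-infinitesimal bialgebra is a `λ`-infBH-bialgebra. -/
theorem yau_twist_infBH
    (K : Type*) [Field K] (A : Type*) [AddCommGroup A] [Module K A]
    (lam : K) (μ : A ⊗[K] A →ₗ[K] A) (Δ : A →ₗ[K] A ⊗[K] A)
    (α β ψ ω : A →ₗ[K] A)
    -- `(A, μ)` associative
    (hassoc : ∀ a b c : A, μ (a ⊗ₜ[K] μ (b ⊗ₜ[K] c)) = μ (μ (a ⊗ₜ[K] b) ⊗ₜ[K] c))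
    -- `(A, Δ)` coassociative
    (hcoassoc : (TensorProduct.assoc K A A A).toLinearMap ∘ₗ
        TensorProduct.map Δ LinearMap.id ∘ₗ Δ = TensorProduct.map LinearMap.id Δ ∘ₗ Δ)
    -- `Δ(ab) = aΔ(b) + Δ(a)b + λ (a ⊗ b)`
    (hcompat : ∀ a b : A, Δ (μ (a ⊗ₜ[K] b)) =
      TensorProduct.map μ LinearMap.id ((TensorProduct.assoc K A A A).symm (a ⊗ₜ[K] Δ b))
      + TensorProduct.map LinearMap.id μ ((TensorProduct.assoc K A A A) (Δ a ⊗ₜ[K] b))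
      + lam • (a ⊗ₜ[K] b))
    -- `α, β, ψ, ω` are algebra morphisms
    (hαm : α ∘ₗ μ = μ ∘ₗ TensorProduct.map α α) (hβm : β ∘ₗ μ = μ ∘ₗ TensorProduct.map β β)
    (hψm : ψ ∘ₗ μ = μ ∘ₗ TensorProduct.map ψ ψ) (hωm : ω ∘ₗ μ = μ ∘ₗ TensorProduct.map ω ω)
    -- `α, β, ψ, ω` are coalgebra morphisms
    (hαc : TensorProduct.map α α ∘ₗ Δ = Δ ∘ₗ α) (hβc : TensorProduct.map β β ∘ₗ Δ = Δ ∘ₗ β)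
    (hψc : TensorProduct.map ψ ψ ∘ₗ Δ = Δ ∘ₗ ψ) (hωc : TensorProduct.map ω ω ∘ₗ Δ = Δ ∘ₗ ω)
    -- any two of them commute
    (hαβ : α ∘ₗ β = β ∘ₗ α) (hαψ : α ∘ₗ ψ = ψ ∘ₗ α) (hαω : α ∘ₗ ω = ω ∘ₗ α)
    (hβψ : β ∘ₗ ψ = ψ ∘ₗ β) (hβω : β ∘ₗ ω = ω ∘ₗ β) (hψω : ψ ∘ₗ ω = ω ∘ₗ ψ) :
    IsInfBH K A lam (μ ∘ₗ TensorProduct.map α β) (TensorProduct.map ω ψ ∘ₗ Δ) α β ψ ω := by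
    -- pointwise commutation facts
  have pαβ : ∀ x, α (β x) = β (α x) := fun x => LinearMap.congr_fun hαβ x
  have pαψ : ∀ x, α (ψ x) = ψ (α x) := fun x => LinearMap.congr_fun hαψ x
  have pαω : ∀ x, α (ω x) = ω (α x) := fun x => LinearMap.congr_fun hαω x
  have pβψ : ∀ x, β (ψ x) = ψ (β x) := fun x => LinearMap.congr_fun hβψ x
  have pβω : ∀ x, β (ω x) = ω (β x) := fun x => LinearMap.congr_fun hβω x
  have pψω : ∀ x, ψ (ω x) = ω (ψ x) := fun x => LinearMap.congr_fun hψω x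
  -- pointwise multiplicativity
  have pαm : ∀ x y : A, α (μ (x ⊗ₜ[K] y)) = μ (α x ⊗ₜ[K] α y) := fun x y => by
    simpa using LinearMap.congr_fun hαm (x ⊗ₜ[K] y)
  have pβm : ∀ x y : A, β (μ (x ⊗ₜ[K] y)) = μ (β x ⊗ₜ[K] β y) := fun x y => by
    simpa using LinearMap.congr_fun hβm (x ⊗ₜ[K] y)
  have pψm : ∀ x y : A, ψ (μ (x ⊗ₜ[K] y)) = μ (ψ x ⊗ₜ[K] ψ y) := fun x y => by
    simpa using LinearMap.congr_fun hψm (x ⊗ₜ[K] y)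
  have pωm : ∀ x y : A, ω (μ (x ⊗ₜ[K] y)) = μ (ω x ⊗ₜ[K] ω y) := fun x y => by
    simpa using LinearMap.congr_fun hωm (x ⊗ₜ[K] y)
  -- helper : commuting maps give commuting tensor maps
  have mapswap : ∀ f g f' g' : A →ₗ[K] A, f ∘ₗ g = g ∘ₗ f → f' ∘ₗ g' = g' ∘ₗ f' →
      TensorProduct.map f f' ∘ₗ TensorProduct.map g g'
        = TensorProduct.map g g' ∘ₗ TensorProduct.map f f' := by
    intro f g f' g' h1 h2
    rw [← TensorProduct.map_comp, h1, h2, TensorProduct.map_comp]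
  refine ⟨⟨hαβ, ?_, ?_, ?_⟩, ⟨hψω, ?_, ?_, ?_⟩, hαψ, hαω, hβψ, hβω, ?_, ?_, ?_, ?_, ?_⟩
  · -- α multiplicative for μ'
    intro a b
    simp only [LinearMap.comp_apply, TensorProduct.map_tmul, pαm, pαβ]
  · -- β multiplicative for μ'
    intro a b
    simp only [LinearMap.comp_apply, TensorProduct.map_tmul, pβm, pαβ]
  · -- BiHom associativity
    intro a b c
    simp only [LinearMap.comp_apply, TensorProduct.map_tmul]
    rw [pβm, hassoc, pαm, pαβ]
  · -- ψ comultiplicative for Δ'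
    rw [← LinearMap.comp_assoc, mapswap ψ ω ψ ψ hψω rfl, LinearMap.comp_assoc, hψc,
      LinearMap.comp_assoc]
  · -- ω comultiplicative for Δ'
    rw [← LinearMap.comp_assoc, mapswap ω ω ω ψ rfl (hψω.symm), LinearMap.comp_assoc, hωc,
      LinearMap.comp_assoc]
  · -- BiHom coassociativity
    have k1 : TensorProduct.map (TensorProduct.map ω ψ ∘ₗ Δ) ψ ∘ₗ TensorProduct.map ω ψ
        = TensorProduct.map (TensorProduct.map (ω ∘ₗ ω) (ψ ∘ₗ ω)) (ψ ∘ₗ ψ) ∘ₗ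
          TensorProduct.map Δ LinearMap.id := by
      rw [← TensorProduct.map_comp, LinearMap.comp_assoc, ← hωc, ← LinearMap.comp_assoc,
        ← TensorProduct.map_comp, ← TensorProduct.map_comp, LinearMap.comp_id]
    have k3 : TensorProduct.map (ψ ∘ₗ ω) (ψ ∘ₗ ψ) ∘ₗ Δ
        = (TensorProduct.map ω ψ ∘ₗ Δ) ∘ₗ ψ := by
      rw [hψω, TensorProduct.map_comp, LinearMap.comp_assoc, hψc, ← LinearMap.comp_assoc]
    have pco : ∀ x : A, (TensorProduct.assoc K A A A)
        (TensorProduct.map Δ LinearMap.id (Δ x)) = TensorProduct.map LinearMap.id Δ (Δ x) :=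
      fun x => by simpa using LinearMap.congr_fun hcoassoc x
    apply LinearMap.ext; intro a
    simp only [LinearMap.comp_apply, LinearEquiv.coe_coe]
    rw [← LinearMap.comp_apply (TensorProduct.map (TensorProduct.map ω ψ ∘ₗ Δ) ψ)
      (TensorProduct.map ω ψ), k1, LinearMap.comp_apply, ← TensorProduct.map_map_assoc, pco,
      ← LinearMap.comp_apply (TensorProduct.map (ω ∘ₗ ω) _) (TensorProduct.map LinearMap.id Δ),
      ← TensorProduct.map_comp, LinearMap.comp_id, k3,
      ← LinearMap.comp_apply (TensorProduct.map ω (TensorProduct.map ω ψ ∘ₗ Δ))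
        (TensorProduct.map ω ψ), ← TensorProduct.map_comp]
  · -- α comultiplicative for Δ'
    rw [← LinearMap.comp_assoc, mapswap α ω α ψ hαω hαψ, LinearMap.comp_assoc, hαc,
      LinearMap.comp_assoc]
  · -- β comultiplicative for Δ'
    rw [← LinearMap.comp_assoc, mapswap β ω β ψ hβω hβψ, LinearMap.comp_assoc, hβc,
      LinearMap.comp_assoc]
  · -- ψ multiplicative for μ'
    rw [← LinearMap.comp_assoc, hψm, LinearMap.comp_assoc, mapswap ψ α ψ β hαψ.symm hβψ.symm, ← LinearMap.comp_assoc]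
  · -- ω multiplicative for μ'
    rw [← LinearMap.comp_assoc, hωm, LinearMap.comp_assoc, mapswap ω α ω β hαω.symm hβω.symm, ← LinearMap.comp_assoc]
  · -- compatibility
    intro a b
    have hΔβ : Δ (β b) = TensorProduct.map β β (Δ b) := (LinearMap.congr_fun hβc b).symm
    have hΔα : Δ (α a) = TensorProduct.map α α (Δ a) := (LinearMap.congr_fun hαc a).symm
    have T1 : ∀ t : A ⊗[K] A,
        TensorProduct.map ω ψ (TensorProduct.map μ LinearMap.id
          ((TensorProduct.assoc K A A A).symm (α a ⊗ₜ[K] TensorProduct.map β β t)))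
        = TensorProduct.map (μ ∘ₗ TensorProduct.map α β) β
          ((TensorProduct.assoc K A A A).symm (ω a ⊗ₜ[K] TensorProduct.map ω ψ t)) := by
      intro t
      induction t using TensorProduct.induction_on with
      | zero => simp
      | tmul x y =>
          simp only [TensorProduct.map_tmul, TensorProduct.assoc_symm_tmul,
            LinearMap.id_apply, LinearMap.comp_apply]
          rw [pωm, pαω, pβω, pβψ]
      | add u v hu hv =>
          simp only [map_add, TensorProduct.tmul_add] at *
          rw [hu, hv]
    have T2 : ∀ s : A ⊗[K] A,
        TensorProduct.map ω ψ (TensorProduct.map LinearMap.id μ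
          ((TensorProduct.assoc K A A A) (TensorProduct.map α α s ⊗ₜ[K] β b)))
        = TensorProduct.map α (μ ∘ₗ TensorProduct.map α β)
          ((TensorProduct.assoc K A A A) (TensorProduct.map ω ψ s ⊗ₜ[K] ψ b)) := by
      intro s
      induction s using TensorProduct.induction_on with
      | zero => simp
      | tmul x y =>
          simp only [TensorProduct.map_tmul, TensorProduct.assoc_tmul,
            LinearMap.id_apply, LinearMap.comp_apply]
          rw [pψm, pαω, pαψ, pβψ]
      | add u v hu hv =>
          simp only [map_add, TensorProduct.add_tmul] at *
          rw [hu, hv]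
    calc (TensorProduct.map ω ψ ∘ₗ Δ) ((μ ∘ₗ TensorProduct.map α β) (a ⊗ₜ[K] b))
        = TensorProduct.map ω ψ (Δ (μ (α a ⊗ₜ[K] β b))) := by
          simp [LinearMap.comp_apply]
      _ = TensorProduct.map ω ψ (TensorProduct.map μ LinearMap.id
            ((TensorProduct.assoc K A A A).symm (α a ⊗ₜ[K] TensorProduct.map β β (Δ b))))
          + TensorProduct.map ω ψ (TensorProduct.map LinearMap.id μ
            ((TensorProduct.assoc K A A A) (TensorProduct.map α α (Δ a) ⊗ₜ[K] β b)))
          + lam • TensorProduct.map ω ψ (α a ⊗ₜ[K] β b) := by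
          rw [hcompat (α a) (β b), hΔβ, hΔα]
          simp only [map_add, map_smul]
      _ = TensorProduct.map (μ ∘ₗ TensorProduct.map α β) β
            ((TensorProduct.assoc K A A A).symm (ω a ⊗ₜ[K] (TensorProduct.map ω ψ ∘ₗ Δ) b))
          + TensorProduct.map α (μ ∘ₗ TensorProduct.map α β)
            ((TensorProduct.assoc K A A A) ((TensorProduct.map ω ψ ∘ₗ Δ) a ⊗ₜ[K] ψ b))
          + lam • (α (ω a) ⊗ₜ[K] β (ψ b)) := by
          rw [T1 (Δ b), T2 (Δ a)]
          simp only [LinearMap.comp_apply, TensorProduct.map_tmul]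
          rw [pαω, pβψ]
end
end

section
/- Let (A, μ, 1, α, β) be a unitary BiHom-associative algebra and ψ, ω : A → A linear maps commuting with α, β, multiplicative with respect to μ, and fixing 1. Define Δ(a) = −λ(ω(a)⊗1). Then (A, μ, 1, Δ, α, β, ψ, ω) is a unitary λ-infinitesimal BiHom-bialgebra; in particular Δ is BiHom-coassociative and satisfies Δ(ab) = ω(a)b₁⊗β(b₂) + α(a₁)⊗a₂ψ(b) + λ(αω(a)⊗βψ(b)). -/
open TensorProduct

noncomputable section

variable (K : Type*) [Field K] (A : Type*) [AddCommGroup A] [Module K A]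
variable (M : Type*) [AddCommGroup M] [Module K M]

/-- every unitary BiHom-associative algebra is a unitary
`λ`-infBH-bialgebra with `Δ(a) = -λ (ω(a) ⊗ 1)`. -/
theorem unitary_infBH_of_biHomAlgebra
    (K : Type*) [Field K] (A : Type*) [AddCommGroup A] [Module K A]
    (lam : K) (μ : A ⊗[K] A →ₗ[K] A) (α β ψ ω : A →ₗ[K] A) (e : A)
    (halg : BiHomAssoc K A μ α β)
    (hunit : IsUnitBH K A μ α β ψ ω e)
    -- Eq. (12.1): `ψ, ω` commute with `α, β` and with each other
    (hαψ : α ∘ₗ ψ = ψ ∘ₗ α) (hαω : α ∘ₗ ω = ω ∘ₗ α)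
    (hβψ : β ∘ₗ ψ = ψ ∘ₗ β) (hβω : β ∘ₗ ω = ω ∘ₗ β) (hψω : ψ ∘ₗ ω = ω ∘ₗ ψ)
    -- Eq. (12.3): `ψ, ω` are multiplicative
    (hψm : ψ ∘ₗ μ = μ ∘ₗ TensorProduct.map ψ ψ)
    (hωm : ω ∘ₗ μ = μ ∘ₗ TensorProduct.map ω ω) :
    IsInfBH K A lam μ
      ((-lam) • (((TensorProduct.mk K A A).flip e) ∘ₗ ω)) α β ψ ω := by
  obtain ⟨hαe, hβe, hψe, hωe, hre, hle⟩ := hunit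
  have hαψ' := fun a => LinearMap.ext_iff.mp hαψ a
  have hαω' := fun a => LinearMap.ext_iff.mp hαω a
  have hβψ' := fun a => LinearMap.ext_iff.mp hβψ a
  have hβω' := fun a => LinearMap.ext_iff.mp hβω a
  have hψω' := fun a => LinearMap.ext_iff.mp hψω a
  have hωm' := fun x => LinearMap.ext_iff.mp hωm x
  simp only [LinearMap.comp_apply] at hαψ' hαω' hβψ' hβω' hψω' hωm'
  refine ⟨halg, ⟨hψω, ?_, ?_, ?_⟩, hαψ, hαω, hβψ, hβω, ?_, ?_, hψm, hωm, ?_⟩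
  · ext a
    simp [TensorProduct.mk, hψe, hψω' a]
  · ext a
    simp [TensorProduct.mk, hωe]
  · ext a
    simp [TensorProduct.mk, hψe, hωe, TensorProduct.assoc_tmul, TensorProduct.neg_tmul,
      TensorProduct.tmul_neg, TensorProduct.smul_tmul', TensorProduct.tmul_smul,
      smul_smul, mul_comm]
    rw [← smul_smul, TensorProduct.smul_tmul, TensorProduct.smul_tmul']
  · ext a
    simp [TensorProduct.mk, hαe, hαω' a]
  · ext a
    simp [TensorProduct.mk, hβe, hβω' a]
  · intro a b
    simp only [LinearMap.smul_apply, LinearMap.comp_apply, TensorProduct.mk_apply,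
      LinearMap.flip_apply, TensorProduct.tmul_smul, TensorProduct.smul_tmul',
      map_smul, LinearEquiv.map_smul]
    rw [hωm' (a ⊗ₜ[K] b)]
    simp only [TensorProduct.map_tmul, TensorProduct.assoc_symm_tmul,
      TensorProduct.assoc_tmul, hβe, hre]
    simp only [hle, TensorProduct.tmul_smul, map_smul, map_neg, TensorProduct.smul_tmul',
      TensorProduct.neg_tmul, neg_smul, one_smul, neg_neg, neg_one_smul,
      TensorProduct.tmul_neg, map_neg]
    abel_nf
    simp [← TensorProduct.smul_tmul', map_smul]
end
end

section
/- Let (A, Δ, ε, ψ, ω) be a counitary BiHom-coassociative coalgebra and α, β : A → A linear maps commuting with ψ, ω, comultiplicative with respect to Δ, with ε∘α = ε and ε∘β = ε. Define μ(a⊗b) = −λ ε(a) β(b). Then (A, μ, Δ, ε, α, β, ψ, ω) is a counitary λ-infinitesimal BiHom-bialgebra; in particular μ is BiHom-associative and the compatibility condition Δ(ab) = ω(a)b₁⊗β(b₂) + α(a₁)⊗a₂ψ(b) + λ(αω(a)⊗βψ(b)) holds. -/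
open TensorProduct

noncomputable section

variable (K : Type*) [Field K] (A : Type*) [AddCommGroup A] [Module K A]
variable (M : Type*) [AddCommGroup M] [Module K M]

/-- every counitary BiHom-coassociative coalgebra is a counitary
`λ`-infBH-bialgebra with `μ(a ⊗ b) = -λ ε(a) β(b)`. -/
theorem counitary_infBH_of_biHomCoalgebra
    (K : Type*) [Field K] (A : Type*) [AddCommGroup A] [Module K A]
    (lam : K) (Δ : A →ₗ[K] A ⊗[K] A) (α β ψ ω : A →ₗ[K] A) (ε : A →ₗ[K] K)
    (hcoa : BiHomCoassoc K A Δ ψ ω)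
    -- counit axioms
    (hεψ : ε ∘ₗ ψ = ε) (hεω : ε ∘ₗ ω = ε)
    (hεl : (TensorProduct.rid K A).toLinearMap ∘ₗ TensorProduct.map LinearMap.id ε ∘ₗ Δ = ω)
    (hεr : (TensorProduct.lid K A).toLinearMap ∘ₗ TensorProduct.map ε LinearMap.id ∘ₗ Δ = ψ)
    -- Eq. (12.1) and commutation of `α, β`
    (hαψ : α ∘ₗ ψ = ψ ∘ₗ α) (hαω : α ∘ₗ ω = ω ∘ₗ α)
    (hβψ : β ∘ₗ ψ = ψ ∘ₗ β) (hβω : β ∘ₗ ω = ω ∘ₗ β) (hαβ : α ∘ₗ β = β ∘ₗ α)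
    -- Eq. (12.2): `α, β` comultiplicative
    (hαc : TensorProduct.map α α ∘ₗ Δ = Δ ∘ₗ α)
    (hβc : TensorProduct.map β β ∘ₗ Δ = Δ ∘ₗ β)
    -- Eq. (12.31)
    (hεα : ε ∘ₗ α = ε) (hεβ : ε ∘ₗ β = ε) :
    IsInfBH K A lam
      ((-lam) • (β ∘ₗ (TensorProduct.lid K A).toLinearMap ∘ₗ
        TensorProduct.map ε LinearMap.id))
      Δ α β ψ ω ∧
    IsCounitBH K A Δ α β ψ ω ε := by
  set m : A ⊗[K] A →ₗ[K] A := ((-lam) • (β ∘ₗ (TensorProduct.lid K A).toLinearMap ∘ₗ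
        TensorProduct.map ε LinearMap.id)) with hmdef
  have hm : ∀ a b : A, m (a ⊗ₜ[K] b) = (-lam * ε a) • β b := by
    intro a b
    simp [hmdef, TensorProduct.smul_tmul', smul_smul, mul_comm]
  have hεα' : ∀ x, ε (α x) = ε x := fun x => LinearMap.congr_fun hεα x
  have hεβ' : ∀ x, ε (β x) = ε x := fun x => LinearMap.congr_fun hεβ x
  have hεψ' : ∀ x, ε (ψ x) = ε x := fun x => LinearMap.congr_fun hεψ x
  have hεω' : ∀ x, ε (ω x) = ε x := fun x => LinearMap.congr_fun hεω x
  have hαβ' : ∀ x, α (β x) = β (α x) := fun x => LinearMap.congr_fun hαβ x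
  have hβψ' : ∀ x, β (ψ x) = ψ (β x) := fun x => LinearMap.congr_fun hβψ x
  refine ⟨⟨⟨hαβ, ?_, ?_, ?_⟩, hcoa, hαψ, hαω, hβψ, hβω, hαc, hβc, ?_, ?_, ?_⟩,
    hεα, hεβ, hεψ, hεω, hεl, hεr⟩
  · intro a b; simp [hm, hεα', hαβ']
  · intro a b; simp [hm, hεβ']
  · intro a b c
    simp only [hm, map_smul, hεα', hεβ', smul_smul, smul_eq_mul]
    congr 1
    ring
  · -- ψ ∘ m = m ∘ (ψ ⊗ ψ)
    apply TensorProduct.ext'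
    intro a b
    simp [hm, hεψ', hβψ']
  · -- ω ∘ m = m ∘ (ω ⊗ ω)
    apply TensorProduct.ext'
    intro a b
    have hβω' : ∀ x, β (ω x) = ω (β x) := fun x => LinearMap.congr_fun hβω x
    simp [hm, hεω', hβω']
  · -- compatibility
    intro a b
    have key1 : ∀ t : A ⊗[K] A,
        TensorProduct.map m β ((TensorProduct.assoc K A A A).symm (ω a ⊗ₜ[K] t))
          = (-lam * ε a) • TensorProduct.map β β t := by
      intro t
      induction t using TensorProduct.induction_on with
      | zero => simp
      | tmul x y => simp [hm, hεω', TensorProduct.smul_tmul', neg_tmul, smul_tmul']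
      | add x y hx hy => simp [tmul_add, map_add, hx, hy, smul_add]
    have key2 : ∀ t : A ⊗[K] A,
        TensorProduct.map α m ((TensorProduct.assoc K A A A) (t ⊗ₜ[K] ψ b))
          = (-lam) • (α ((TensorProduct.rid K A)
              ((TensorProduct.map LinearMap.id ε) t)) ⊗ₜ[K] β (ψ b)) := by
      intro t
      induction t using TensorProduct.induction_on with
      | zero => simp
      | tmul x y =>
          simp only [TensorProduct.assoc_tmul, TensorProduct.map_tmul, hm,
            LinearMap.id_coe, id_eq, TensorProduct.rid_tmul, map_smul,
            TensorProduct.tmul_smul, TensorProduct.smul_tmul', smul_smul]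
      | add x y hx hy => simp [add_tmul, map_add, hx, hy, smul_add]
    have hωa : (TensorProduct.rid K A) ((TensorProduct.map LinearMap.id ε) (Δ a)) = ω a :=
      LinearMap.congr_fun hεl a
    have hΔβ : Δ (β b) = TensorProduct.map β β (Δ b) := (LinearMap.congr_fun hβc b).symm
    rw [hm, map_smul, hΔβ, key1, key2, hωa, add_assoc, ← add_smul, neg_add_cancel,
      zero_smul, add_zero]
end
end

section
/- In a counitary λ-infinitesimal BiHom-bialgebra (A, μ, Δ, ε, α, β, ψ, ω), the counit ε satisfies ε(ab) = −λ ε(a) ε(b) for all a, b ∈ A. In particular if λ = −1, then ε is an algebra morphism. -/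
open TensorProduct

noncomputable section

variable (K : Type*) [Field K] (A : Type*) [AddCommGroup A] [Module K A]
variable (M : Type*) [AddCommGroup M] [Module K M]

/-- in a counitary `λ`-infBH-bialgebra, `ε(ab) = -λ ε(a) ε(b)`;
in particular for `λ = -1` the counit is an algebra morphism. -/
theorem counit_mul_of_counitary_infBH
    (K : Type*) [Field K] (A : Type*) [AddCommGroup A] [Module K A]
    (lam : K) (μ : A ⊗[K] A →ₗ[K] A) (Δ : A →ₗ[K] A ⊗[K] A)
    (α β ψ ω : A →ₗ[K] A) (ε : A →ₗ[K] K)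
    (hbi : IsInfBH K A lam μ Δ α β ψ ω)
    (hcu : IsCounitBH K A Δ α β ψ ω ε) :
    (∀ a b : A, ε (μ (a ⊗ₜ[K] b)) = -(lam * (ε a * ε b))) ∧
    (lam = -1 → ∀ a b : A, ε (μ (a ⊗ₜ[K] b)) = ε a * ε b) := by
  obtain ⟨hass, hco, h1, h2, h3, h4, h5, h6, hψμ, hωμ, hcompat⟩ := hbi
  obtain ⟨hεα, hεβ, hεψ, hεω, hrΔ, hlΔ⟩ := hcu
  have pα : ∀ x : A, ε (α x) = ε x := fun x => LinearMap.congr_fun hεα x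
  have pβ : ∀ x : A, ε (β x) = ε x := fun x => LinearMap.congr_fun hεβ x
  have pψ : ∀ x : A, ε (ψ x) = ε x := fun x => LinearMap.congr_fun hεψ x
  have pω : ∀ x : A, ε (ω x) = ε x := fun x => LinearMap.congr_fun hεω x
  set r : A ⊗[K] A →ₗ[K] A :=
    (TensorProduct.rid K A).toLinearMap ∘ₗ TensorProduct.map LinearMap.id ε with hrdef
  set l : A ⊗[K] A →ₗ[K] A :=
    (TensorProduct.lid K A).toLinearMap ∘ₗ TensorProduct.map ε LinearMap.id with hldef
  set e2 : A ⊗[K] A →ₗ[K] K := ε ∘ₗ l with he2def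
  have e2tmul : ∀ x y : A, e2 (x ⊗ₜ[K] y) = ε x * ε y := by
    intro x y
    simp [he2def, hldef, smul_eq_mul]
  have hX : ∀ a b : A, ε (μ (a ⊗ₜ[K] b)) = -(lam * (ε a * ε b)) := by
    intro a b
    have hc := hcompat a b
    have hE := congrArg e2 hc
    -- term 1
    have T1 : ∀ (c : A) (t : A ⊗[K] A),
        e2 (TensorProduct.map μ β ((TensorProduct.assoc K A A A).symm (c ⊗ₜ[K] t)))
          = ε (μ (c ⊗ₜ[K] r t)) := by
      intro c t
      induction t using TensorProduct.induction_on with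
      | zero => simp
      | tmul x y =>
          simp only [TensorProduct.assoc_symm_tmul, TensorProduct.map_tmul, e2tmul, pβ,
            hrdef, LinearMap.comp_apply, LinearEquiv.coe_coe, LinearMap.id_coe, id_eq,
            TensorProduct.rid_tmul, TensorProduct.tmul_smul, map_smul, smul_eq_mul]
          ring
      | add u v hu hv =>
          simp only [TensorProduct.tmul_add, map_add, hu, hv]
    have T2 : ∀ (c : A) (t : A ⊗[K] A),
        e2 (TensorProduct.map α μ ((TensorProduct.assoc K A A A) (t ⊗ₜ[K] c)))
          = ε (μ (l t ⊗ₜ[K] c)) := by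
      intro c t
      induction t using TensorProduct.induction_on with
      | zero => simp
      | tmul x y =>
          simp only [TensorProduct.assoc_tmul, TensorProduct.map_tmul, e2tmul, pα,
            hldef, LinearMap.comp_apply, LinearEquiv.coe_coe, LinearMap.id_coe, id_eq,
            TensorProduct.lid_tmul]
          rw [TensorProduct.smul_tmul, TensorProduct.tmul_smul, map_smul, map_smul,
            smul_eq_mul]
      | add u v hu hv =>
          simp only [TensorProduct.add_tmul, map_add, hu, hv]
    rw [map_add, map_add, T1, T2] at hE
    have hrb : r (Δ b) = ω b := LinearMap.congr_fun hrΔ b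
    have hla : l (Δ a) = ψ a := LinearMap.congr_fun hlΔ a
    rw [hrb, hla] at hE
    -- LHS of hE
    have hLHS : e2 (Δ (μ (a ⊗ₜ[K] b))) = ε (μ (a ⊗ₜ[K] b)) := by
      have : l (Δ (μ (a ⊗ₜ[K] b))) = ψ (μ (a ⊗ₜ[K] b)) := LinearMap.congr_fun hlΔ _
      simp only [he2def, LinearMap.comp_apply, this, pψ]
    -- middle terms
    have hω1 : ε (μ (ω a ⊗ₜ[K] ω b)) = ε (μ (a ⊗ₜ[K] b)) := by
      have := LinearMap.congr_fun hωμ (a ⊗ₜ[K] b)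
      simp only [LinearMap.comp_apply, TensorProduct.map_tmul] at this
      rw [← this, pω]
    have hψ1 : ε (μ (ψ a ⊗ₜ[K] ψ b)) = ε (μ (a ⊗ₜ[K] b)) := by
      have := LinearMap.congr_fun hψμ (a ⊗ₜ[K] b)
      simp only [LinearMap.comp_apply, TensorProduct.map_tmul] at this
      rw [← this, pψ]
    have hlast : e2 (lam • (α (ω a) ⊗ₜ[K] β (ψ b))) = lam * (ε a * ε b) := by
      rw [map_smul, e2tmul, pα, pω, pβ, pψ, smul_eq_mul]
    rw [hLHS, hω1, hψ1, hlast] at hE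
    linear_combination -hE
  exact ⟨hX, fun h a b => by rw [hX a b, h]; ring⟩
end
end

section
/- Let (A, μ_A, χ_A, α_A, β_A) and (B, μ_B, χ_B, α_B, β_B) be λ-augmented BiHom-associative algebras. Define on A⊗B the product (a⊗b)·(a'⊗b') = χ_B(b) aa'⊗β_B(b') + χ_A(a') α_A(a)⊗bb' + λ χ_A(a')χ_B(b) α_A(a)⊗β_B(b'). Then (A⊗B, ·, α_A⊗α_B, β_A⊗β_B) is a BiHom-associative algebra, and with augmentation χ_A⊗χ_B it is again a λ-augmented BiHom-associative algebra. -/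
open TensorProduct

noncomputable section

variable (K : Type*) [Field K] (A : Type*) [AddCommGroup A] [Module K A]
variable (M : Type*) [AddCommGroup M] [Module K M]

/-- `λ`-augmented BiHom-associative algebra: augmentation axioms. -/
def IsAugmented (K : Type*) [Field K] (A : Type*) [AddCommGroup A] [Module K A]
    (lam : K) (μ : A ⊗[K] A →ₗ[K] A) (α β : A →ₗ[K] A) (χ : A →ₗ[K] K) : Prop :=
  χ ∘ₗ α = χ ∧ χ ∘ₗ β = χ ∧
  ∀ a b : A, χ (μ (a ⊗ₜ[K] b)) = -(lam * (χ a * χ b))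

/-- tensor product of `λ`-augmented BiHom-associative algebras. -/
theorem tensor_of_augmented
    (K : Type*) [Field K] (A : Type*) [AddCommGroup A] [Module K A]
    (B : Type*) [AddCommGroup B] [Module K B] (lam : K)
    (μA : A ⊗[K] A →ₗ[K] A) (αA βA : A →ₗ[K] A) (χA : A →ₗ[K] K)
    (μB : B ⊗[K] B →ₗ[K] B) (αB βB : B →ₗ[K] B) (χB : B →ₗ[K] K)
    (hA : BiHomAssoc K A μA αA βA) (hA' : IsAugmented K A lam μA αA βA χA)
    (hB : BiHomAssoc K B μB αB βB) (hB' : IsAugmented K B lam μB αB βB χB) :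
    -- the new multiplication on `A ⊗ B`
    let f : A ⊗[K] A →ₗ[K] A :=
      αA ∘ₗ (TensorProduct.rid K A).toLinearMap ∘ₗ TensorProduct.map LinearMap.id χA
    let g : B ⊗[K] B →ₗ[K] B :=
      βB ∘ₗ (TensorProduct.lid K B).toLinearMap ∘ₗ TensorProduct.map χB LinearMap.id
    let L : (A ⊗[K] B) ⊗[K] (A ⊗[K] B) →ₗ[K] A ⊗[K] B :=
      (TensorProduct.map μA g + TensorProduct.map f μB
        + lam • TensorProduct.map f g) ∘ₗ
        (TensorProduct.tensorTensorTensorComm K A B A B).toLinearMap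
    BiHomAssoc K (A ⊗[K] B) L (TensorProduct.map αA αB) (TensorProduct.map βA βB) ∧
    IsAugmented K (A ⊗[K] B) lam L (TensorProduct.map αA αB) (TensorProduct.map βA βB)
      ((TensorProduct.lid K K).toLinearMap ∘ₗ TensorProduct.map χA χB) := by

  intro f g L
  obtain ⟨hAc, hAα, hAβ, hAassoc⟩ := hA
  obtain ⟨hBc, hBα, hBβ, hBassoc⟩ := hB
  obtain ⟨hχAα, hχAβ, hχAμ⟩ := hA'
  obtain ⟨hχBα, hχBβ, hχBμ⟩ := hB'
  have hχAα' : ∀ a, χA (αA a) = χA a := fun a => LinearMap.congr_fun hχAα a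
  have hχAβ' : ∀ a, χA (βA a) = χA a := fun a => LinearMap.congr_fun hχAβ a
  have hχBα' : ∀ b, χB (αB b) = χB b := fun b => LinearMap.congr_fun hχBα b
  have hχBβ' : ∀ b, χB (βB b) = χB b := fun b => LinearMap.congr_fun hχBβ b
  have hAc' : ∀ a, αA (βA a) = βA (αA a) := fun a => LinearMap.congr_fun hAc a
  have hBc' : ∀ b, αB (βB b) = βB (αB b) := fun b => LinearMap.congr_fun hBc b
  have hL : ∀ (a : A) (b : B) (a' : A) (b' : B),
      L ((a ⊗ₜ[K] b) ⊗ₜ[K] (a' ⊗ₜ[K] b')) =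
        χB b • (μA (a ⊗ₜ[K] a') ⊗ₜ[K] βB b') + χA a' • (αA a ⊗ₜ[K] μB (b ⊗ₜ[K] b'))
          + (lam * (χA a' * χB b)) • (αA a ⊗ₜ[K] βB b') := by
    intro a b a' b'
    simp only [L, f, g, LinearMap.comp_apply, LinearEquiv.coe_coe,
      TensorProduct.tensorTensorTensorComm_tmul, LinearMap.add_apply,
      LinearMap.smul_apply, TensorProduct.map_tmul, LinearMap.id_coe, id_eq,
      TensorProduct.rid_tmul, TensorProduct.lid_tmul, map_smul,
      ← TensorProduct.smul_tmul', TensorProduct.tmul_smul, smul_smul]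
    module
  constructor
  · refine ⟨?_, ?_, ?_, ?_⟩
    · ext a b
      simp [hAc', hBc']
    · have key : (TensorProduct.map αA αB) ∘ₗ L
          = L ∘ₗ TensorProduct.map (TensorProduct.map αA αB) (TensorProduct.map αA αB) := by
        ext a b a' b'
        simp only [LinearMap.comp_apply, TensorProduct.map_tmul,
          TensorProduct.AlgebraTensorModule.curry_apply, TensorProduct.curry_apply,
          LinearMap.coe_restrictScalars, hL, hχAα', hχBα', map_add, map_smul,
          TensorProduct.map_tmul, hAα, hBα, hAc', hBc',
          ← TensorProduct.smul_tmul', TensorProduct.tmul_smul, smul_smul]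
      intro x y
      simpa using LinearMap.congr_fun key (x ⊗ₜ[K] y)
    · have key : (TensorProduct.map βA βB) ∘ₗ L
          = L ∘ₗ TensorProduct.map (TensorProduct.map βA βB) (TensorProduct.map βA βB) := by
        ext a b a' b'
        simp only [LinearMap.comp_apply, TensorProduct.map_tmul,
          TensorProduct.AlgebraTensorModule.curry_apply, TensorProduct.curry_apply,
          LinearMap.coe_restrictScalars, hL, hχAβ', hχBβ', map_add, map_smul,
          TensorProduct.map_tmul, hAβ, hBβ, hAc', hBc',
          ← TensorProduct.smul_tmul', TensorProduct.tmul_smul, smul_smul]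
      intro x y
      simpa using LinearMap.congr_fun key (x ⊗ₜ[K] y)
    · have key : L ∘ₗ TensorProduct.map (TensorProduct.map αA αB) L
          = (L ∘ₗ TensorProduct.map L (TensorProduct.map βA βB)) ∘ₗ
            (TensorProduct.assoc K (A ⊗[K] B) (A ⊗[K] B) (A ⊗[K] B)).symm.toLinearMap := by
        ext a b a' b' a'' b''
        simp only [LinearMap.comp_apply, LinearEquiv.coe_coe,
          TensorProduct.AlgebraTensorModule.curry_apply, TensorProduct.curry_apply,
          LinearMap.coe_restrictScalars, TensorProduct.assoc_symm_tmul,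
          TensorProduct.map_tmul, hL, map_add, map_smul, TensorProduct.tmul_add,
          TensorProduct.tmul_smul, ← TensorProduct.smul_tmul', hχAα', hχAβ', hχBα',
          hχBβ', hχAμ, hχBμ, hAα, hBα, hAβ, hBβ, hAassoc, hBassoc, hAc', hBc', smul_smul, TensorProduct.add_tmul]
        module
      intro x y z
      have := LinearMap.congr_fun key (x ⊗ₜ[K] (y ⊗ₜ[K] z))
      simpa using this
  · refine ⟨?_, ?_, ?_⟩
    · ext a b
      simp [hχAα', hχBα']
    · ext a b
      simp [hχAβ', hχBβ']
    · have key : ((TensorProduct.lid K K).toLinearMap ∘ₗ TensorProduct.map χA χB) ∘ₗ L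
          = (-lam) • (LinearMap.mul' K K ∘ₗ
              TensorProduct.map ((TensorProduct.lid K K).toLinearMap ∘ₗ TensorProduct.map χA χB)
                ((TensorProduct.lid K K).toLinearMap ∘ₗ TensorProduct.map χA χB)) := by
        ext a b a' b'
        simp only [LinearMap.comp_apply, LinearEquiv.coe_coe,
          TensorProduct.AlgebraTensorModule.curry_apply, TensorProduct.curry_apply,
          LinearMap.coe_restrictScalars, hL, map_add, map_smul, TensorProduct.map_tmul,
          TensorProduct.lid_tmul, LinearMap.smul_apply, LinearMap.mul'_apply,
          hχAμ, hχBμ, hχAα', hχBβ', smul_eq_mul]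
        ring
      intro x y
      have := LinearMap.congr_fun key (x ⊗ₜ[K] y)
      simp only [LinearMap.comp_apply, TensorProduct.map_tmul, LinearMap.smul_apply,
        LinearMap.mul'_apply, LinearEquiv.coe_coe, TensorProduct.lid_tmul,
        smul_eq_mul] at this ⊢
      rw [this]; ring
end
end

section
/- Let (C, Δ_C, ζ_C, ψ_C, ω_C) and (D, Δ_D, ζ_D, ψ_D, ω_D) be λ-coaugmented BiHom-coassociative coalgebras with distinguished elements I_C = ζ_C(1), I_D = ζ_D(1). Define on C⊗D the coproduct Δ(c⊗d) = (c₁⊗I_D)⊗(c₂⊗ψ_D(d)) + (ω_C(c)⊗d₁)⊗(I_C⊗d₂) + λ(ω_C(c)⊗I_D)⊗(I_C⊗ψ_D(d)). Then (C⊗D, Δ, ψ_C⊗ψ_D, ω_C⊗ω_D) is a BiHom-coassociative coalgebra. -/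
open TensorProduct

noncomputable section

variable (K : Type*) [Field K] (A : Type*) [AddCommGroup A] [Module K A]
variable (M : Type*) [AddCommGroup M] [Module K M]

/-- `λ`-coaugmented BiHom-coassociative coalgebra: coaugmentation axioms,
with distinguished element `I = ζ(1)`. -/
def IsCoaugmented (K : Type*) [Field K] (C : Type*) [AddCommGroup C] [Module K C]
    (lam : K) (Δ : C →ₗ[K] C ⊗[K] C) (ψ ω : C →ₗ[K] C) (I : C) : Prop :=
  ψ I = I ∧ ω I = I ∧ Δ I = (-lam) • (I ⊗ₜ[K] I)

/-- Naturality of `tensorTensorTensorComm` against maps. -/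
private lemma ttc_nat {K : Type*} [Field K] {C : Type*} [AddCommGroup C] [Module K C]
    {D : Type*} [AddCommGroup D] [Module K D]
    (f g : C →ₗ[K] C) (f' g' : D →ₗ[K] D) (X : C ⊗[K] C) (Y : D ⊗[K] D) :
    TensorProduct.map (TensorProduct.map f f') (TensorProduct.map g g')
      (tensorTensorTensorComm K C C D D (X ⊗ₜ[K] Y))
      = tensorTensorTensorComm K C C D D
          (TensorProduct.map f g X ⊗ₜ[K] TensorProduct.map f' g' Y) := by
  induction X using TensorProduct.induction_on with
  | zero => simp only [zero_tmul, tmul_zero, map_zero, smul_zero, add_zero, zero_add]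
  | add x₁ x₂ h₁ h₂ => simp [add_tmul, h₁, h₂]
  | tmul x y =>
    induction Y using TensorProduct.induction_on with
    | zero => simp only [zero_tmul, tmul_zero, map_zero, smul_zero, add_zero, zero_add]
    | add y₁ y₂ h₁ h₂ => simp [tmul_add, h₁, h₂]
    | tmul u v => simp [tensorTensorTensorComm_tmul]

set_option maxHeartbeats 1000000 in
/-- tensor product of `λ`-coaugmented BiHom-coassociative coalgebras. -/
theorem tensor_of_coaugmented
    (K : Type*) [Field K] (C : Type*) [AddCommGroup C] [Module K C]
    (D : Type*) [AddCommGroup D] [Module K D] (lam : K)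
    (ΔC : C →ₗ[K] C ⊗[K] C) (ψC ωC : C →ₗ[K] C) (IC : C)
    (ΔD : D →ₗ[K] D ⊗[K] D) (ψD ωD : D →ₗ[K] D) (ID : D)
    (hC : BiHomCoassoc K C ΔC ψC ωC) (hC' : IsCoaugmented K C lam ΔC ψC ωC IC)
    (hD : BiHomCoassoc K D ΔD ψD ωD) (hD' : IsCoaugmented K D lam ΔD ψD ωD ID) :
    -- `j_D(d) = I_D ⊗ ψ_D(d)` and `k_C(c) = ω_C(c) ⊗ I_C`
    let jD : D →ₗ[K] D ⊗[K] D := (TensorProduct.mk K D D ID) ∘ₗ ψD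
    let kC : C →ₗ[K] C ⊗[K] C := ((TensorProduct.mk K C C).flip IC) ∘ₗ ωC
    let Δnew : C ⊗[K] D →ₗ[K] (C ⊗[K] D) ⊗[K] (C ⊗[K] D) :=
      (TensorProduct.tensorTensorTensorComm K C C D D).toLinearMap ∘ₗ
        (TensorProduct.map ΔC jD + TensorProduct.map kC ΔD
          + lam • TensorProduct.map kC jD)
    BiHomCoassoc K (C ⊗[K] D) Δnew
      (TensorProduct.map ψC ψD) (TensorProduct.map ωC ωD) := by
  obtain ⟨hcomC, hpsiC, homC, hcoC⟩ := hC
  obtain ⟨hpsiIC, homIC, hdIC⟩ := hC'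
  obtain ⟨hcomD, hpsiD, homD, hcoD⟩ := hD
  obtain ⟨hpsiID, homID, hdID⟩ := hD'
  intro jD kC Δnew
  have hcomCe : ∀ x, ψC (ωC x) = ωC (ψC x) := fun x => LinearMap.congr_fun hcomC x
  have hcomDe : ∀ x, ψD (ωD x) = ωD (ψD x) := fun x => LinearMap.congr_fun hcomD x
  have hpsiCe : ∀ x, TensorProduct.map ψC ψC (ΔC x) = ΔC (ψC x) :=
    fun x => LinearMap.congr_fun hpsiC x
  have homCe : ∀ x, TensorProduct.map ωC ωC (ΔC x) = ΔC (ωC x) :=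
    fun x => LinearMap.congr_fun homC x
  have hpsiDe : ∀ x, TensorProduct.map ψD ψD (ΔD x) = ΔD (ψD x) :=
    fun x => LinearMap.congr_fun hpsiD x
  have homDe : ∀ x, TensorProduct.map ωD ωD (ΔD x) = ΔD (ωD x) :=
    fun x => LinearMap.congr_fun homD x
  have hcoCe : ∀ x, (TensorProduct.assoc K C C C)
      (TensorProduct.map ΔC ψC (ΔC x)) = TensorProduct.map ωC ΔC (ΔC x) :=
    fun x => LinearMap.congr_fun hcoC x
  have hcoDe : ∀ x, (TensorProduct.assoc K D D D)
      (TensorProduct.map ΔD ψD (ΔD x)) = TensorProduct.map ωD ΔD (ΔD x) :=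
    fun x => LinearMap.congr_fun hcoD x
  have hΔ : ∀ (a : C) (b : D), Δnew (a ⊗ₜ[K] b) =
      tensorTensorTensorComm K C C D D (ΔC a ⊗ₜ (ID ⊗ₜ ψD b))
      + tensorTensorTensorComm K C C D D ((ωC a ⊗ₜ IC) ⊗ₜ ΔD b)
      + lam • tensorTensorTensorComm K C C D D ((ωC a ⊗ₜ IC) ⊗ₜ (ID ⊗ₜ ψD b)) := by
    intro a b
    simp [Δnew, jD, kC]
  -- `Δnew` on `a ⊗ I_D` and on `I_C ⊗ b`
  have L1 : ∀ a : C, Δnew (a ⊗ₜ[K] ID) =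
      tensorTensorTensorComm K C C D D (ΔC a ⊗ₜ (ID ⊗ₜ ID)) := by
    intro a
    rw [hΔ, hpsiID, hdID]
    simp only [tmul_smul, map_smul]
    module
  have L2 : ∀ b : D, Δnew (IC ⊗ₜ[K] b) =
      tensorTensorTensorComm K C C D D ((IC ⊗ₜ IC) ⊗ₜ ΔD b) := by
    intro b
    rw [hΔ, homIC, hdIC]
    simp only [← smul_tmul', map_smul]
    module
  refine ⟨?_, ?_, ?_, ?_⟩
  · -- ψ ∘ ω = ω ∘ ψ
    apply TensorProduct.ext'
    intro a b
    simp [hcomCe, hcomDe]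
  · -- comultiplicativity of ψ
    apply TensorProduct.ext'
    intro a b
    simp only [LinearMap.comp_apply, TensorProduct.map_tmul]
    rw [hΔ a b, hΔ (ψC a) (ψD b), map_add, map_add, map_smul,
      ttc_nat, ttc_nat, ttc_nat]
    simp [hpsiCe, hpsiDe, hpsiIC, hpsiID, hcomCe, hcomDe]
  · -- comultiplicativity of ω
    apply TensorProduct.ext'
    intro a b
    simp only [LinearMap.comp_apply, TensorProduct.map_tmul]
    rw [hΔ a b, hΔ (ωC a) (ωD b), map_add, map_add, map_smul,
      ttc_nat, ttc_nat, ttc_nat]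
    simp [homCe, homDe, homIC, homID, hcomCe, hcomDe]
  · -- BiHom-coassociativity
    apply TensorProduct.ext'
    intro c d
    simp only [LinearMap.comp_apply, LinearEquiv.coe_coe]
    set τ := tensorTensorTensorComm K C C D D with hτ
    set aso := TensorProduct.assoc K (C ⊗[K] D) (C ⊗[K] D) (C ⊗[K] D) with haso
    set rI : C →ₗ[K] C ⊗[K] D := (TensorProduct.mk K C D).flip ID with hrI
    set lI : D →ₗ[K] C ⊗[K] D := TensorProduct.mk K C D IC with hlI
    set rd : C →ₗ[K] C ⊗[K] D := (TensorProduct.mk K C D).flip (ψD (ψD d)) with hrd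
    set lc : D →ₗ[K] C ⊗[K] D := TensorProduct.mk K C D (ωC (ωC c)) with hlc
    set g1 := TensorProduct.map rI (TensorProduct.map rI rd) with hg1
    set g2 := TensorProduct.map lc (TensorProduct.map lI lI) with hg2
    set F3 := TensorProduct.map rI (TensorProduct.map LinearMap.id lI) ∘ₗ
        (TensorProduct.map LinearMap.id (TensorProduct.assoc K C D D).symm.toLinearMap) ∘ₗ
        (TensorProduct.assoc K C C (D ⊗[K] D)).toLinearMap with hF3
    set F4 := (TensorProduct.mk K (C ⊗[K] D) ((C ⊗[K] D) ⊗[K] (C ⊗[K] D))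
        (ωC (ωC c) ⊗ₜ[K] ID)) ∘ₗ TensorProduct.map lI lI with hF4
    set F5 := TensorProduct.map rI
        (((TensorProduct.mk K (C ⊗[K] D) (C ⊗[K] D)).flip (IC ⊗ₜ[K] ψD (ψD d))) ∘ₗ rI) with hF5
    have hττ : ∀ (x y : C) (u v : D),
        τ ((x ⊗ₜ[K] y) ⊗ₜ[K] (u ⊗ₜ[K] v)) = (x ⊗ₜ[K] u) ⊗ₜ[K] (y ⊗ₜ[K] v) := by
      intro x y u v
      rw [hτ, tensorTensorTensorComm_tmul]
    have S1 : ∀ (W : C ⊗[K] C) (z : C),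
        aso (τ (W ⊗ₜ (ID ⊗ₜ ID)) ⊗ₜ (z ⊗ₜ ψD (ψD d)))
          = g1 ((TensorProduct.assoc K C C C) (W ⊗ₜ z)) := by
      intro W z
      induction W using TensorProduct.induction_on with
      | zero => simp only [zero_tmul, tmul_zero, map_zero, smul_zero, add_zero, zero_add]
      | add w₁ w₂ h₁ h₂ => simp only [add_tmul, map_add, h₁, h₂]
      | tmul u v => simp [hτ, haso, hg1, hrI, hrd]
    have S2 : ∀ (W : D ⊗[K] D) (v : D),
        aso (τ ((ωC (ωC c) ⊗ₜ IC) ⊗ₜ W) ⊗ₜ (IC ⊗ₜ v))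
          = g2 ((TensorProduct.assoc K D D D) (W ⊗ₜ v)) := by
      intro W v
      induction W using TensorProduct.induction_on with
      | zero => simp only [zero_tmul, tmul_zero, map_zero, smul_zero, add_zero, zero_add]
      | add w₁ w₂ h₁ h₂ => simp only [tmul_add, add_tmul, map_add, h₁, h₂]
      | tmul p q => simp [hτ, haso, hg2, hlc, hlI]
    have S3 : ∀ (W : C ⊗[K] C) (u v : D),
        aso (τ (W ⊗ₜ (ID ⊗ₜ u)) ⊗ₜ (IC ⊗ₜ v)) = F3 (W ⊗ₜ (u ⊗ₜ v)) := by
      intro W u v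
      induction W using TensorProduct.induction_on with
      | zero => simp only [zero_tmul, tmul_zero, map_zero, smul_zero, add_zero, zero_add]
      | add w₁ w₂ h₁ h₂ => simp only [add_tmul, map_add, h₁, h₂]
      | tmul x y => simp [hτ, haso, hF3, hrI, hlI]
    have S5 : ∀ W : C ⊗[K] C,
        aso (τ (W ⊗ₜ (ID ⊗ₜ ID)) ⊗ₜ (IC ⊗ₜ ψD (ψD d))) = F5 W := by
      intro W
      induction W using TensorProduct.induction_on with
      | zero => simp only [zero_tmul, tmul_zero, map_zero, smul_zero, add_zero, zero_add]
      | add w₁ w₂ h₁ h₂ => simp only [add_tmul, map_add, h₁, h₂]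
      | tmul x y => simp [hτ, haso, hF5, hrI]
    have U1 : ∀ (x : C) (W : C ⊗[K] C),
        (x ⊗ₜ[K] ID) ⊗ₜ τ (W ⊗ₜ (ID ⊗ₜ ψD (ψD d))) = g1 (x ⊗ₜ W) := by
      intro x W
      induction W using TensorProduct.induction_on with
      | zero => simp only [zero_tmul, tmul_zero, map_zero, smul_zero, add_zero, zero_add]
      | add w₁ w₂ h₁ h₂ => simp only [add_tmul, tmul_add, map_add, h₁, h₂]
      | tmul u v => simp [hτ, hg1, hrI, hrd]
    have U2 : ∀ (u : D) (W : D ⊗[K] D),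
        (ωC (ωC c) ⊗ₜ[K] u) ⊗ₜ τ ((IC ⊗ₜ IC) ⊗ₜ W) = g2 (u ⊗ₜ W) := by
      intro u W
      induction W using TensorProduct.induction_on with
      | zero => simp only [zero_tmul, tmul_zero, map_zero, smul_zero, add_zero, zero_add]
      | add w₁ w₂ h₁ h₂ => simp only [tmul_add, map_add, h₁, h₂]
      | tmul p q => simp [hτ, hg2, hlc, hlI]
    have U3 : ∀ (x y : C) (W : D ⊗[K] D),
        (x ⊗ₜ[K] ID) ⊗ₜ τ ((y ⊗ₜ IC) ⊗ₜ W) = F3 ((x ⊗ₜ y) ⊗ₜ W) := by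
      intro x y W
      induction W using TensorProduct.induction_on with
      | zero => simp only [zero_tmul, tmul_zero, map_zero, smul_zero, add_zero, zero_add]
      | add w₁ w₂ h₁ h₂ => simp only [tmul_add, map_add, h₁, h₂]
      | tmul u v => simp [hτ, hF3, hrI, hlI]
    have U4 : ∀ W : D ⊗[K] D,
        (ωC (ωC c) ⊗ₜ[K] ID) ⊗ₜ τ ((IC ⊗ₜ IC) ⊗ₜ W) = F4 W := by
      intro W
      induction W using TensorProduct.induction_on with
      | zero => simp only [zero_tmul, tmul_zero, map_zero, smul_zero, add_zero, zero_add]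
      | add w₁ w₂ h₁ h₂ => simp only [tmul_add, map_add, h₁, h₂]
      | tmul p q => simp [hτ, hF4, hlI]
    have P1 : ∀ X : C ⊗[K] C,
        aso (TensorProduct.map Δnew (TensorProduct.map ψC ψD) (τ (X ⊗ₜ (ID ⊗ₜ ψD d))))
          = g1 ((TensorProduct.assoc K C C C) (TensorProduct.map ΔC ψC X)) := by
      intro X
      induction X using TensorProduct.induction_on with
      | zero => simp only [zero_tmul, tmul_zero, map_zero, smul_zero, add_zero, zero_add]
      | add x₁ x₂ h₁ h₂ => simp only [add_tmul, map_add, h₁, h₂]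
      | tmul a a' =>
        rw [hττ]
        simp only [TensorProduct.map_tmul]
        rw [L1 a, S1 (ΔC a) (ψC a')]
    have P2 : ∀ Y : D ⊗[K] D,
        aso (TensorProduct.map Δnew (TensorProduct.map ψC ψD) (τ ((ωC c ⊗ₜ IC) ⊗ₜ Y)))
          = F3 (ΔC (ωC c) ⊗ₜ TensorProduct.map ψD ψD Y)
            + g2 ((TensorProduct.assoc K D D D) (TensorProduct.map ΔD ψD Y))
            + lam • F4 (TensorProduct.map ψD ψD Y) := by
      intro Y
      induction Y using TensorProduct.induction_on with
      | zero => simp only [zero_tmul, tmul_zero, map_zero, smul_zero, add_zero, zero_add]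
      | add y₁ y₂ h₁ h₂ =>
        simp only [tmul_add, map_add, h₁, h₂, smul_add]
        abel
      | tmul u v =>
        rw [hττ]
        simp only [TensorProduct.map_tmul]
        rw [hpsiIC, hΔ (ωC c) u, add_tmul, add_tmul, ← smul_tmul',
          map_add, map_add, map_smul,
          S3 (ΔC (ωC c)) (ψD u) (ψD v), S2 (ΔD u) (ψD v), hττ]
        simp [haso, hF4, hlI]
    have P3 : aso (TensorProduct.map Δnew (TensorProduct.map ψC ψD)
          (τ ((ωC c ⊗ₜ IC) ⊗ₜ (ID ⊗ₜ ψD d)))) = F5 (ΔC (ωC c)) := by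
      rw [hττ]
      simp only [TensorProduct.map_tmul]
      rw [hpsiIC, L1 (ωC c), S5 (ΔC (ωC c))]
    have Q1 : ∀ X : C ⊗[K] C,
        TensorProduct.map (TensorProduct.map ωC ωD) Δnew (τ (X ⊗ₜ (ID ⊗ₜ ψD d)))
          = g1 (TensorProduct.map ωC ΔC X)
            + F3 (TensorProduct.map ωC ωC X ⊗ₜ ΔD (ψD d))
            + lam • F5 (TensorProduct.map ωC ωC X) := by
      intro X
      induction X using TensorProduct.induction_on with
      | zero => simp only [zero_tmul, tmul_zero, map_zero, smul_zero, add_zero, zero_add]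
      | add x₁ x₂ h₁ h₂ =>
        simp only [add_tmul, map_add, h₁, h₂, smul_add]
        abel
      | tmul c₁ c₂ =>
        rw [hττ]
        simp only [TensorProduct.map_tmul]
        rw [homID, hΔ c₂ (ψD d), tmul_add, tmul_add, tmul_smul,
          U1 (ωC c₁) (ΔC c₂), U3 (ωC c₁) (ωC c₂) (ΔD (ψD d)), hττ]
        simp [hF5, hrI]
    have Q2 : ∀ Y : D ⊗[K] D,
        TensorProduct.map (TensorProduct.map ωC ωD) Δnew (τ ((ωC c ⊗ₜ IC) ⊗ₜ Y))
          = g2 (TensorProduct.map ωD ΔD Y) := by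
      intro Y
      induction Y using TensorProduct.induction_on with
      | zero => simp only [zero_tmul, tmul_zero, map_zero, smul_zero, add_zero, zero_add]
      | add y₁ y₂ h₁ h₂ => simp only [tmul_add, map_add, h₁, h₂]
      | tmul u v =>
        rw [hττ]
        simp only [TensorProduct.map_tmul]
        rw [L2 v, U2 (ωD u) (ΔD v)]
    have Q3 : TensorProduct.map (TensorProduct.map ωC ωD) Δnew
          (τ ((ωC c ⊗ₜ IC) ⊗ₜ (ID ⊗ₜ ψD d))) = F4 (ΔD (ψD d)) := by
      rw [hττ]
      simp only [TensorProduct.map_tmul]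
      rw [homID, L2 (ψD d), U4 (ΔD (ψD d))]
    rw [hΔ c d]
    simp only [map_add, map_smul]
    rw [P1 (ΔC c), P2 (ΔD d), P3, Q1 (ΔC c), Q2 (ΔD d), Q3,
      hcoCe c, hcoDe d, hpsiDe d, homCe c]
    abel
end
end

section
/- Let (A, μ, Δ, ε, α, β, ψ, ω) be a counitary λ-infinitesimal BiHom-bialgebra. Equip A⊗A with the product (a⊗b)·(a'⊗b') = ε(b) aa'⊗β(b') + ε(a') α(a)⊗bb' + λ ε(a')ε(b) α(a)⊗β(b'). Then Δ : (A, μ, α, β) → (A⊗A, ·, α⊗α, β⊗β) is a morphism of BiHom-associative algebras, i.e. Δ(aa') = Δ(a)·Δ(a'). -/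
open TensorProduct

noncomputable section

variable (K : Type*) [Field K] (A : Type*) [AddCommGroup A] [Module K A]
variable (M : Type*) [AddCommGroup M] [Module K M]

/-- for a counitary `λ`-infBH-bialgebra, `Δ` is a morphism of
BiHom-associative algebras into `(A ⊗ A, ·_ε)`. -/
theorem delta_algebra_morphism
    (K : Type*) [Field K] (A : Type*) [AddCommGroup A] [Module K A]
    (lam : K) (μ : A ⊗[K] A →ₗ[K] A) (Δ : A →ₗ[K] A ⊗[K] A)
    (α β ψ ω : A →ₗ[K] A) (ε : A →ₗ[K] K)
    (hbi : IsInfBH K A lam μ Δ α β ψ ω)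
    (hcu : IsCounitBH K A Δ α β ψ ω ε) :
    let f : A ⊗[K] A →ₗ[K] A :=
      α ∘ₗ (TensorProduct.rid K A).toLinearMap ∘ₗ TensorProduct.map LinearMap.id ε
    let g : A ⊗[K] A →ₗ[K] A :=
      β ∘ₗ (TensorProduct.lid K A).toLinearMap ∘ₗ TensorProduct.map ε LinearMap.id
    let L : (A ⊗[K] A) ⊗[K] (A ⊗[K] A) →ₗ[K] A ⊗[K] A :=
      (TensorProduct.map μ g + TensorProduct.map f μ
        + lam • TensorProduct.map f g) ∘ₗ
        (TensorProduct.tensorTensorTensorComm K A A A A).toLinearMap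
    ∀ a a' : A, Δ (μ (a ⊗ₜ[K] a')) = L (Δ a ⊗ₜ[K] Δ a') := by
  intro f g L a a'
  obtain ⟨-, -, -, -, -, -, -, -, -, -, hcompat⟩ := hbi
  obtain ⟨-, -, -, -, hω, hψ⟩ := hcu
  rw [hcompat]
  have hωa := (LinearMap.congr_fun hω a).symm
  have hψa' := (LinearMap.congr_fun hψ a').symm
  simp only [LinearMap.coe_comp, Function.comp_apply, LinearEquiv.coe_coe] at hωa hψa'
  rw [hωa, hψa']
  generalize Δ a = u
  generalize Δ a' = v
  induction u using TensorProduct.induction_on with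
  | zero => simp [L, f, g]
  | add u1 u2 h1 h2 =>
    simp only [map_add, TensorProduct.add_tmul, TensorProduct.tmul_add, smul_add]
    rw [← h1, ← h2]
    abel
  | tmul x y =>
    induction v using TensorProduct.induction_on with
    | zero => simp [L, f, g]
    | add v1 v2 h1 h2 =>
      simp only [map_add, TensorProduct.add_tmul, TensorProduct.tmul_add, smul_add]
      rw [← h1, ← h2]
      abel
    | tmul x' y' =>
      simp only [L, f, g, LinearMap.coe_comp, Function.comp_apply, LinearEquiv.coe_coe,
        TensorProduct.map_tmul, TensorProduct.tensorTensorTensorComm_tmul,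
        TensorProduct.rid_tmul, TensorProduct.lid_tmul,
        TensorProduct.assoc_tmul, TensorProduct.assoc_symm_tmul,
        LinearMap.add_apply, LinearMap.smul_apply, LinearMap.id_apply,
        TensorProduct.tmul_smul, TensorProduct.smul_tmul', map_smul, smul_smul]
      rw [← TensorProduct.smul_tmul' (ε y) x x', map_smul]
      simp only [← TensorProduct.smul_tmul']
      module
end
end

section
/- Let (A, μ, Δ, α_A, β_A, ψ_A, ω_A) be a λ-infinitesimal BiHom-bialgebra, V a vector space with pairwise commuting linear maps α_V, β_V, ψ_V, ω_V. Then (A⊗V, γ, ρ, α_A⊗α_V, β_A⊗β_V, ψ_A⊗ψ_V, ω_A⊗ω_V), with γ = μ⊗β_V : A⊗(A⊗V) → A⊗V and ρ = Δ⊗ψ_V : A⊗V → A⊗(A⊗V), is a left λ-infBH-Hopf module. -/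
open TensorProduct

noncomputable section

variable (K : Type*) [Field K] (A : Type*) [AddCommGroup A] [Module K A]
variable (M : Type*) [AddCommGroup M] [Module K M]

/-- `A ⊗ V` with `γ = μ ⊗ β_V` and `ρ = Δ ⊗ ψ_V` is a left
`λ`-infBH-Hopf module. -/
theorem hopfModule_tensor_trivial
    (K : Type*) [Field K] (A : Type*) [AddCommGroup A] [Module K A]
    (V : Type*) [AddCommGroup V] [Module K V] (lam : K)
    (μ : A ⊗[K] A →ₗ[K] A) (Δ : A →ₗ[K] A ⊗[K] A) (α β ψ ω : A →ₗ[K] A)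
    (αV βV ψV ωV : V →ₗ[K] V)
    (hbi : IsInfBH K A lam μ Δ α β ψ ω)
    (h1 : αV ∘ₗ βV = βV ∘ₗ αV) (h2 : αV ∘ₗ ψV = ψV ∘ₗ αV)
    (h3 : αV ∘ₗ ωV = ωV ∘ₗ αV) (h4 : βV ∘ₗ ψV = ψV ∘ₗ βV)
    (h5 : βV ∘ₗ ωV = ωV ∘ₗ βV) (h6 : ψV ∘ₗ ωV = ωV ∘ₗ ψV) :
    IsInfBHHopfModule K A (A ⊗[K] V) lam μ Δ α β ψ ω
      (TensorProduct.map μ βV ∘ₗ (TensorProduct.assoc K A A V).symm.toLinearMap)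
      ((TensorProduct.assoc K A A V).toLinearMap ∘ₗ TensorProduct.map Δ ψV)
      (TensorProduct.map α αV) (TensorProduct.map β βV)
      (TensorProduct.map ψ ψV) (TensorProduct.map ω ωV) := by
  obtain ⟨⟨hαβ, hαμ, hβμ, hassoc⟩, ⟨hψω, hψΔ, hωΔ, hcoassoc⟩, hαψ, hαω, hβψ, hβω,
    hαΔ, hβΔ, hψμ, hωμ, hcompat⟩ := hbi
  refine ⟨⟨?_, ?_, ?_, ?_⟩, ⟨?_, ?_, ?_, ?_⟩, ?_, ?_, ?_, ?_, ?_⟩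
  · rw [← TensorProduct.map_comp, ← TensorProduct.map_comp, hαβ, h1]
  · intro a m
    induction m using TensorProduct.induction_on with
    | zero => simp
    | tmul b v =>
      simp only [LinearMap.coe_comp, Function.comp_apply, LinearEquiv.coe_coe,
        TensorProduct.assoc_symm_tmul, TensorProduct.map_tmul]
      rw [hαμ]
      congr 1
      exact LinearMap.congr_fun h1 v
    | add m₁ m₂ ih₁ ih₂ => simp only [TensorProduct.tmul_add, map_add, ih₁, ih₂]
  · intro a m
    induction m using TensorProduct.induction_on with
    | zero => simp
    | tmul b v =>
      simp only [LinearMap.coe_comp, Function.comp_apply, LinearEquiv.coe_coe,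
        TensorProduct.assoc_symm_tmul, TensorProduct.map_tmul]
      rw [hβμ]
    | add m₁ m₂ ih₁ ih₂ => simp only [TensorProduct.tmul_add, map_add, ih₁, ih₂]
  · intro a a' m
    induction m using TensorProduct.induction_on with
    | zero => simp
    | tmul b v =>
      simp only [LinearMap.coe_comp, Function.comp_apply, LinearEquiv.coe_coe,
        TensorProduct.assoc_symm_tmul, TensorProduct.map_tmul]
      rw [hassoc]
    | add m₁ m₂ ih₁ ih₂ => simp only [TensorProduct.tmul_add, map_add, ih₁, ih₂]
  · rw [← TensorProduct.map_comp, ← TensorProduct.map_comp, hψω, h6]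
  · apply TensorProduct.ext'
    intro b v
    have key : ∀ (t : A ⊗[K] A) (w : V),
        TensorProduct.map ψ (TensorProduct.map ψ ψV)
          ((TensorProduct.assoc K A A V) (t ⊗ₜ[K] w))
        = (TensorProduct.assoc K A A V) (TensorProduct.map ψ ψ t ⊗ₜ[K] ψV w) := by
      intro t w
      induction t using TensorProduct.induction_on with
      | zero => simp
      | tmul x y => simp
      | add t₁ t₂ ih₁ ih₂ => simp only [TensorProduct.add_tmul, map_add, ih₁, ih₂]
    have hp : TensorProduct.map ψ ψ (Δ b) = Δ (ψ b) := LinearMap.congr_fun hψΔ b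
    simp only [LinearMap.coe_comp, Function.comp_apply, LinearEquiv.coe_coe,
      TensorProduct.map_tmul, key, hp]
  · apply TensorProduct.ext'
    intro b v
    have key : ∀ (t : A ⊗[K] A) (w : V),
        TensorProduct.map ω (TensorProduct.map ω ωV)
          ((TensorProduct.assoc K A A V) (t ⊗ₜ[K] w))
        = (TensorProduct.assoc K A A V) (TensorProduct.map ω ω t ⊗ₜ[K] ωV w) := by
      intro t w
      induction t using TensorProduct.induction_on with
      | zero => simp
      | tmul x y => simp
      | add t₁ t₂ ih₁ ih₂ => simp only [TensorProduct.add_tmul, map_add, ih₁, ih₂]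
    have hp : TensorProduct.map ω ω (Δ b) = Δ (ω b) := LinearMap.congr_fun hωΔ b
    simp only [LinearMap.coe_comp, Function.comp_apply, LinearEquiv.coe_coe,
      TensorProduct.map_tmul, key, hp]
    congr 2
    exact (LinearMap.congr_fun h6 v).symm
  · apply TensorProduct.ext'
    intro b v
    have claim1 : ∀ (t : A ⊗[K] A) (w : V),
        (TensorProduct.assoc K A A (A ⊗[K] V))
          (TensorProduct.map Δ (TensorProduct.map ψ ψV)
            ((TensorProduct.assoc K A A V) (t ⊗ₜ[K] w)))
        = LinearMap.lTensor A
            (LinearMap.lTensor A ((TensorProduct.mk K A V).flip (ψV w)))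
            ((TensorProduct.assoc K A A A) (TensorProduct.map Δ ψ t)) := by
      intro t w
      induction t using TensorProduct.induction_on with
      | zero => simp
      | tmul x y =>
        simp only [TensorProduct.assoc_tmul, TensorProduct.map_tmul]
        generalize Δ x = s
        induction s using TensorProduct.induction_on with
        | zero => simp
        | tmul p q => simp
        | add s₁ s₂ ih₁ ih₂ => simp only [TensorProduct.add_tmul, map_add, ih₁, ih₂]
      | add t₁ t₂ ih₁ ih₂ => simp only [TensorProduct.add_tmul, map_add, ih₁, ih₂]
    have claim2 : ∀ (t : A ⊗[K] A) (w : V),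
        TensorProduct.map ω
          ((TensorProduct.assoc K A A V).toLinearMap ∘ₗ TensorProduct.map Δ ψV)
          ((TensorProduct.assoc K A A V) (t ⊗ₜ[K] w))
        = LinearMap.lTensor A
            (LinearMap.lTensor A ((TensorProduct.mk K A V).flip (ψV w)))
            (TensorProduct.map ω Δ t) := by
      intro t w
      induction t using TensorProduct.induction_on with
      | zero => simp
      | tmul x y =>
        simp only [TensorProduct.assoc_tmul, TensorProduct.map_tmul,
          LinearMap.coe_comp, Function.comp_apply, LinearEquiv.coe_coe,
          LinearMap.lTensor_tmul]
        congr 1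
        generalize Δ y = s
        induction s using TensorProduct.induction_on with
        | zero => simp
        | tmul p q => simp
        | add s₁ s₂ ih₁ ih₂ => simp only [TensorProduct.add_tmul, map_add, ih₁, ih₂]
      | add t₁ t₂ ih₁ ih₂ => simp only [TensorProduct.add_tmul, map_add, ih₁, ih₂]
    simp only [LinearMap.coe_comp, Function.comp_apply, LinearEquiv.coe_coe,
      TensorProduct.map_tmul]
    have hc : (TensorProduct.assoc K A A A) (TensorProduct.map Δ ψ (Δ b))
        = TensorProduct.map ω Δ (Δ b) := LinearMap.congr_fun hcoassoc b
    rw [claim1, claim2, hc]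
  · rw [← TensorProduct.map_comp, ← TensorProduct.map_comp, hαψ, h2]
  · rw [← TensorProduct.map_comp, ← TensorProduct.map_comp, hαω, h3]
  · rw [← TensorProduct.map_comp, ← TensorProduct.map_comp, hβψ, h4]
  · rw [← TensorProduct.map_comp, ← TensorProduct.map_comp, hβω, h5]
  · intro a m
    have claimT1 : ∀ (t : A ⊗[K] A) (c : A) (w : V),
        (TensorProduct.assoc K A A V)
          (TensorProduct.map μ β ((TensorProduct.assoc K A A A).symm (c ⊗ₜ[K] t))
            ⊗ₜ[K] βV (ψV w))
        = TensorProduct.map μ (TensorProduct.map β βV)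
            ((TensorProduct.assoc K A A (A ⊗[K] V)).symm
              (c ⊗ₜ[K] (TensorProduct.assoc K A A V) (t ⊗ₜ[K] ψV w))) := by
      intro t c w
      induction t using TensorProduct.induction_on with
      | zero => simp
      | tmul x y => simp
      | add t₁ t₂ ih₁ ih₂ =>
        simp only [TensorProduct.tmul_add, TensorProduct.add_tmul, map_add, ih₁, ih₂]
    have claimT2 : ∀ (t : A ⊗[K] A) (c : A) (u : V),
        (TensorProduct.assoc K A A V)
          (TensorProduct.map α μ ((TensorProduct.assoc K A A A) (t ⊗ₜ[K] c))
            ⊗ₜ[K] βV u)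
        = TensorProduct.map α
            (TensorProduct.map μ βV ∘ₗ (TensorProduct.assoc K A A V).symm.toLinearMap)
            ((TensorProduct.assoc K A A (A ⊗[K] V)) (t ⊗ₜ[K] (c ⊗ₜ[K] u))) := by
      intro t c u
      induction t using TensorProduct.induction_on with
      | zero => simp
      | tmul x y => simp
      | add t₁ t₂ ih₁ ih₂ =>
        simp only [TensorProduct.add_tmul, map_add, ih₁, ih₂]
    induction m using TensorProduct.induction_on with
    | zero => simp
    | tmul b v =>
      simp only [LinearMap.coe_comp, Function.comp_apply, LinearEquiv.coe_coe,
        TensorProduct.assoc_symm_tmul, TensorProduct.map_tmul]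
      have hv : ψV (βV v) = βV (ψV v) := (LinearMap.congr_fun h4 v).symm
      rw [hcompat a b, hv]
      simp only [TensorProduct.add_tmul, TensorProduct.smul_tmul', map_add, map_smul]
      rw [claimT1, claimT2]
      simp only [TensorProduct.assoc_tmul, TensorProduct.map_tmul]
    | add m₁ m₂ ih₁ ih₂ =>
      simp only [TensorProduct.tmul_add, map_add, ih₁, ih₂, smul_add]
      abel
end
end

section
/- Let (A, μ, 1, Δ, α_A, β_A, ψ_A, ω_A) be a unitary λ-infinitesimal BiHom-bialgebra, V a vector space with pairwise commuting maps α_V, β_V, ψ_V, ω_V. Define γ(a⊗(b⊗v)) = ab⊗β_V(v) and ρ(a⊗v) = Δ(a)⊗ψ_V(v) + λ ω_A(a)⊗1_A⊗ψ_V(v). Then (A⊗V, γ, ρ, α_A⊗α_V, β_A⊗β_V, ψ_A⊗ψ_V, ω_A⊗ω_V) is a left λ-infBH-Hopf module. -/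
open TensorProduct

noncomputable section

variable (K : Type*) [Field K] (A : Type*) [AddCommGroup A] [Module K A]
variable (M : Type*) [AddCommGroup M] [Module K M]

set_option maxHeartbeats 1000000 in
/-- for a unitary `λ`-infBH-bialgebra, `A ⊗ V` with
`γ(a ⊗ (b ⊗ v)) = ab ⊗ β_V(v)` and
`ρ(a ⊗ v) = Δ(a) ⊗ ψ_V(v) + λ ω(a) ⊗ 1 ⊗ ψ_V(v)` is a left `λ`-infBH-Hopf module. -/
theorem hopfModule_tensor_unitary
    (K : Type*) [Field K] (A : Type*) [AddCommGroup A] [Module K A]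
    (V : Type*) [AddCommGroup V] [Module K V] (lam : K)
    (μ : A ⊗[K] A →ₗ[K] A) (Δ : A →ₗ[K] A ⊗[K] A) (α β ψ ω : A →ₗ[K] A) (e : A)
    (αV βV ψV ωV : V →ₗ[K] V)
    (hbi : IsInfBH K A lam μ Δ α β ψ ω)
    (hunit : IsUnitBH K A μ α β ψ ω e)
    (h1 : αV ∘ₗ βV = βV ∘ₗ αV) (h2 : αV ∘ₗ ψV = ψV ∘ₗ αV)
    (h3 : αV ∘ₗ ωV = ωV ∘ₗ αV) (h4 : βV ∘ₗ ψV = ψV ∘ₗ βV)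
    (h5 : βV ∘ₗ ωV = ωV ∘ₗ βV) (h6 : ψV ∘ₗ ωV = ωV ∘ₗ ψV) :
    IsInfBHHopfModule K A (A ⊗[K] V) lam μ Δ α β ψ ω
      (TensorProduct.map μ βV ∘ₗ (TensorProduct.assoc K A A V).symm.toLinearMap)
      ((TensorProduct.assoc K A A V).toLinearMap ∘ₗ TensorProduct.map Δ ψV
        + lam • TensorProduct.map ω ((TensorProduct.mk K A V e) ∘ₗ ψV))
      (TensorProduct.map α αV) (TensorProduct.map β βV)
      (TensorProduct.map ψ ψV) (TensorProduct.map ω ωV) := by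
  obtain ⟨⟨hαβ, hαμ, hβμ, hassoc⟩, ⟨hψω, hψΔ, hωΔ, hcoassoc⟩, hαψ, hαω, hβψ, hβω,
    hαΔ, hβΔ, hψμ, hωμ, hcompat⟩ := hbi
  obtain ⟨hαe, hβe, hψe, hωe, hre, hle⟩ := hunit
  have hαβ' : ∀ a, α (β a) = β (α a) := fun a => LinearMap.congr_fun hαβ a
  have hψω' : ∀ a, ψ (ω a) = ω (ψ a) := fun a => LinearMap.congr_fun hψω a
  have hαψ' : ∀ a, α (ψ a) = ψ (α a) := fun a => LinearMap.congr_fun hαψ a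
  have hαω' : ∀ a, α (ω a) = ω (α a) := fun a => LinearMap.congr_fun hαω a
  have hβψ' : ∀ a, β (ψ a) = ψ (β a) := fun a => LinearMap.congr_fun hβψ a
  have hβω' : ∀ a, β (ω a) = ω (β a) := fun a => LinearMap.congr_fun hβω a
  have h1' : ∀ v, αV (βV v) = βV (αV v) := fun v => LinearMap.congr_fun h1 v
  have h2' : ∀ v, αV (ψV v) = ψV (αV v) := fun v => LinearMap.congr_fun h2 v
  have h3' : ∀ v, αV (ωV v) = ωV (αV v) := fun v => LinearMap.congr_fun h3 v
  have h4' : ∀ v, βV (ψV v) = ψV (βV v) := fun v => LinearMap.congr_fun h4 v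
  have h5' : ∀ v, βV (ωV v) = ωV (βV v) := fun v => LinearMap.congr_fun h5 v
  have h6' : ∀ v, ψV (ωV v) = ωV (ψV v) := fun v => LinearMap.congr_fun h6 v
  have hψΔ' : ∀ a, TensorProduct.map ψ ψ (Δ a) = Δ (ψ a) :=
    fun a => LinearMap.congr_fun hψΔ a
  have hωΔ' : ∀ a, TensorProduct.map ω ω (Δ a) = Δ (ω a) :=
    fun a => LinearMap.congr_fun hωΔ a
  have hαΔ' : ∀ a, TensorProduct.map α α (Δ a) = Δ (α a) :=
    fun a => LinearMap.congr_fun hαΔ a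
  have hβΔ' : ∀ a, TensorProduct.map β β (Δ a) = Δ (β a) :=
    fun a => LinearMap.congr_fun hβΔ a
  have hωμ' : ∀ a b : A, ω (μ (a ⊗ₜ[K] b)) = μ (ω a ⊗ₜ[K] ω b) := fun a b => by
    have := LinearMap.congr_fun hωμ (a ⊗ₜ[K] b); simpa using this
  have hψμ' : ∀ a b : A, ψ (μ (a ⊗ₜ[K] b)) = μ (ψ a ⊗ₜ[K] ψ b) := fun a b => by
    have := LinearMap.congr_fun hψμ (a ⊗ₜ[K] b); simpa using this
  have hcoassoc' : ∀ a, (TensorProduct.assoc K A A A)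
      (TensorProduct.map Δ ψ (Δ a)) = TensorProduct.map ω Δ (Δ a) :=
    fun a => LinearMap.congr_fun hcoassoc a
  -- Δ e = - lam • (e ⊗ e)
  have hmapββ : ∀ x : A ⊗[K] A,
      TensorProduct.map μ β ((TensorProduct.assoc K A A A).symm (e ⊗ₜ[K] x))
        = TensorProduct.map β β x := by
    intro x
    induction x using TensorProduct.induction_on with
    | zero => simp
    | tmul p q => simp [hle]
    | add x y hx hy => simp only [TensorProduct.tmul_add, map_add, hx, hy]
  have hmapαα : ∀ x : A ⊗[K] A,
      TensorProduct.map α μ ((TensorProduct.assoc K A A A) (x ⊗ₜ[K] e))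
        = TensorProduct.map α α x := by
    intro x
    induction x using TensorProduct.induction_on with
    | zero => simp
    | tmul p q => simp [hre]
    | add x y hx hy => simp only [TensorProduct.add_tmul, map_add, hx, hy]
  have hΔe : Δ e = (-lam) • (e ⊗ₜ[K] e) := by
    have h := hcompat e e
    rw [hle e, hβe, hωe, hψe, hαe, hβe, hmapββ, hmapαα, hβΔ', hαΔ', hβe, hαe] at h
    have h0 : (0 : A ⊗[K] A) = Δ e + lam • (e ⊗ₜ[K] e) := by
      abel_nf at h ⊢
      linear_combination (norm := abel_nf) h
    rw [neg_smul, eq_neg_iff_add_eq_zero]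
    exact h0.symm
  -- element formulas
  set γm : A ⊗[K] (A ⊗[K] V) →ₗ[K] A ⊗[K] V :=
    TensorProduct.map μ βV ∘ₗ (TensorProduct.assoc K A A V).symm.toLinearMap with hγm
  set ρm : A ⊗[K] V →ₗ[K] A ⊗[K] (A ⊗[K] V) :=
    (TensorProduct.assoc K A A V).toLinearMap ∘ₗ TensorProduct.map Δ ψV
      + lam • TensorProduct.map ω ((TensorProduct.mk K A V e) ∘ₗ ψV) with hρm
  have hγ : ∀ (a b : A) (v : V), γm (a ⊗ₜ[K] (b ⊗ₜ[K] v)) = μ (a ⊗ₜ[K] b) ⊗ₜ[K] βV v := by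
    intro a b v; simp [hγm]
  have hρ : ∀ (a : A) (v : V), ρm (a ⊗ₜ[K] v) =
      (TensorProduct.assoc K A A V) (Δ a ⊗ₜ[K] ψV v)
        + lam • (ω a ⊗ₜ[K] (e ⊗ₜ[K] ψV v)) := by
    intro a v; simp [hρm, TensorProduct.smul_tmul']
  have hρe : ∀ w : V, ρm (e ⊗ₜ[K] w) = 0 := by
    intro w
    rw [hρ, hΔe, hωe, ← TensorProduct.smul_tmul', map_smul]
    simp only [TensorProduct.assoc_tmul]
    module
  -- naturality helper for assoc
  have hnat : ∀ (f g : A →ₗ[K] A) (h : V →ₗ[K] V) (x : A ⊗[K] A) (u : V),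
      TensorProduct.map f (TensorProduct.map g h)
        ((TensorProduct.assoc K A A V) (x ⊗ₜ[K] u))
      = (TensorProduct.assoc K A A V) (TensorProduct.map f g x ⊗ₜ[K] h u) := by
    intro f g h x u
    induction x using TensorProduct.induction_on with
    | zero => simp
    | tmul p q => simp
    | add x y hx hy => simp only [TensorProduct.add_tmul, map_add, hx, hy]
  refine ⟨⟨?_, ?_, ?_, ?_⟩, ⟨?_, ?_, ?_, ?_⟩, ?_, ?_, ?_, ?_, ?_⟩
  · apply TensorProduct.ext'; intro a v; simp [hαβ', h1']
  · intro a m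
    induction m using TensorProduct.induction_on with
    | zero => simp
    | tmul b v => simp [hγ, hαμ, h1']
    | add x y hx hy => simp only [TensorProduct.tmul_add, map_add, hx, hy]
  · intro a m
    induction m using TensorProduct.induction_on with
    | zero => simp
    | tmul b v => simp [hγ, hβμ]
    | add x y hx hy => simp only [TensorProduct.tmul_add, map_add, hx, hy]
  · intro a a' m
    induction m using TensorProduct.induction_on with
    | zero => simp
    | tmul b v => simp [hγ, hassoc]
    | add x y hx hy => simp only [TensorProduct.tmul_add, map_add, hx, hy]
  · apply TensorProduct.ext'; intro a v; simp [hψω', h6']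
  · apply TensorProduct.ext'; intro a v
    simp only [LinearMap.comp_apply, TensorProduct.map_tmul, hρ, map_add, map_smul,
      hnat, hψΔ', hψω', hψe]
  · apply TensorProduct.ext'; intro a v
    simp only [LinearMap.comp_apply, TensorProduct.map_tmul, hρ, map_add, map_smul,
      hnat, hωΔ', hωe, h6']
  · -- coassociativity of the comodule
    have claimE : ∀ (y : A ⊗[K] A) (u : V),
        (TensorProduct.assoc K A A V) (y ⊗ₜ[K] u)
          = TensorProduct.map LinearMap.id ((TensorProduct.mk K A V).flip u) y := by
      intro y u
      induction y using TensorProduct.induction_on with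
      | zero => simp
      | tmul p q => simp
      | add x y hx hy => simp only [TensorProduct.add_tmul, map_add, hx, hy]
    have claimM : ∀ (y : A ⊗[K] A) (m : A ⊗[K] V),
        (TensorProduct.assoc K A A (A ⊗[K] V)) (y ⊗ₜ[K] m)
          = TensorProduct.map LinearMap.id ((TensorProduct.mk K A (A ⊗[K] V)).flip m) y := by
      intro y m
      induction y using TensorProduct.induction_on with
      | zero => simp
      | tmul p q => simp
      | add x y hx hy => simp only [TensorProduct.add_tmul, map_add, hx, hy]
    set Φ : V → (A ⊗[K] (A ⊗[K] A)) →ₗ[K] A ⊗[K] (A ⊗[K] (A ⊗[K] V)) :=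
      fun u => TensorProduct.map LinearMap.id
        (TensorProduct.map LinearMap.id ((TensorProduct.mk K A V).flip u)) with hΦ
    have claim1 : ∀ (x : A ⊗[K] A) (w : V),
        (TensorProduct.assoc K A A (A ⊗[K] V))
          (TensorProduct.map Δ (TensorProduct.map ψ ψV)
            ((TensorProduct.assoc K A A V) (x ⊗ₜ[K] w)))
        = Φ (ψV w) ((TensorProduct.assoc K A A A) (TensorProduct.map Δ ψ x)) := by
      intro x w
      induction x using TensorProduct.induction_on with
      | zero => simp
      | tmul b c =>
        simp only [TensorProduct.assoc_tmul, TensorProduct.map_tmul]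
        generalize Δ b = y
        induction y using TensorProduct.induction_on with
        | zero => simp
        | tmul p q => simp [hΦ]
        | add x y hx hy => simp only [TensorProduct.add_tmul, map_add, hx, hy]
      | add x y hx hy => simp only [TensorProduct.add_tmul, map_add, hx, hy]
    have claim2 : ∀ (x : A ⊗[K] A) (w : V),
        TensorProduct.map ω ρm ((TensorProduct.assoc K A A V) (x ⊗ₜ[K] w))
        = Φ (ψV w) (TensorProduct.map ω Δ x)
          + lam • TensorProduct.map LinearMap.id
              ((TensorProduct.mk K A (A ⊗[K] V)).flip (e ⊗ₜ[K] ψV w))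
              (TensorProduct.map ω ω x) := by
      intro x w
      induction x using TensorProduct.induction_on with
      | zero => simp
      | tmul b c =>
        simp only [TensorProduct.assoc_tmul, TensorProduct.map_tmul]
        rw [hρ, TensorProduct.tmul_add, TensorProduct.tmul_smul, claimE]
        simp [hΦ]
      | add x y hx hy =>
        simp only [TensorProduct.add_tmul, map_add, hx, hy, smul_add]
        abel
    apply TensorProduct.ext'; intro a v
    simp only [LinearMap.comp_apply, LinearEquiv.coe_coe]
    have L1 : (TensorProduct.assoc K A A (A ⊗[K] V))
        (TensorProduct.map Δ (TensorProduct.map ψ ψV) (ρm (a ⊗ₜ[K] v)))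
        = Φ (ψV (ψV v)) ((TensorProduct.assoc K A A A) (TensorProduct.map Δ ψ (Δ a)))
          + lam • TensorProduct.map LinearMap.id
              ((TensorProduct.mk K A (A ⊗[K] V)).flip (e ⊗ₜ[K] ψV (ψV v)))
              (TensorProduct.map ω ω (Δ a)) := by
      rw [hρ, map_add, map_add, claim1, map_smul, map_smul]
      congr 1
      rw [hωΔ' a]
      simp only [TensorProduct.map_tmul, hψe]
      exact congrArg (lam • ·) (claimM _ _)
    rw [L1, hρ a v, map_add, map_smul, claim2, hcoassoc']
    have hz : TensorProduct.map ω ρm (ω a ⊗ₜ[K] (e ⊗ₜ[K] ψV v)) = 0 := by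
      rw [TensorProduct.map_tmul, hρe]; simp
    rw [hz, smul_zero, add_zero]
  · apply TensorProduct.ext'; intro a v; simp [hαψ', h2']
  · apply TensorProduct.ext'; intro a v; simp [hαω', h3']
  · apply TensorProduct.ext'; intro a v; simp [hβψ', h4']
  · apply TensorProduct.ext'; intro a v; simp [hβω', h5']
  · -- Hopf module compatibility
    have hT1 : ∀ (c : A) (y : A ⊗[K] A) (u : V),
        (TensorProduct.assoc K A A V)
          ((TensorProduct.map μ β ((TensorProduct.assoc K A A A).symm (c ⊗ₜ[K] y)))
            ⊗ₜ[K] (βV u))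
        = TensorProduct.map μ (TensorProduct.map β βV)
            ((TensorProduct.assoc K A A (A ⊗[K] V)).symm
              (c ⊗ₜ[K] (TensorProduct.assoc K A A V) (y ⊗ₜ[K] u))) := by
      intro c y u
      induction y using TensorProduct.induction_on with
      | zero => simp
      | tmul p q => simp
      | add x y hx hy =>
        simp only [TensorProduct.tmul_add, TensorProduct.add_tmul, map_add, hx, hy]
    have hT2 : ∀ (y : A ⊗[K] A) (c : A) (u : V),
        (TensorProduct.assoc K A A V)
          ((TensorProduct.map α μ ((TensorProduct.assoc K A A A) (y ⊗ₜ[K] c)))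
            ⊗ₜ[K] (βV u))
        = TensorProduct.map α γm
            ((TensorProduct.assoc K A A (A ⊗[K] V)) (y ⊗ₜ[K] (c ⊗ₜ[K] u))) := by
      intro y c u
      induction y using TensorProduct.induction_on with
      | zero => simp
      | tmul p q => simp [hγ]
      | add x y hx hy =>
        simp only [TensorProduct.tmul_add, TensorProduct.add_tmul, map_add, hx, hy]
    intro a m
    induction m using TensorProduct.induction_on with
    | zero =>
      simp only [TensorProduct.tmul_zero, map_zero, smul_zero, add_zero, zero_add]
    | tmul b v =>
      rw [hγ, hρ, hcompat a b]
      have hv : ψV (βV v) = βV (ψV v) := (h4' v).symm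
      rw [hv]
      rw [TensorProduct.add_tmul, TensorProduct.add_tmul, map_add, map_add]
      rw [hT1, hT2]
      rw [TensorProduct.map_tmul, hρ b v, TensorProduct.tmul_add, map_add,
        TensorProduct.tmul_smul, map_smul]
      rw [← TensorProduct.smul_tmul', map_smul]
      simp only [map_add, map_smul, TensorProduct.assoc_tmul, TensorProduct.assoc_symm_tmul,
        TensorProduct.map_tmul, hβe, hωμ' a b, h4']
      abel
    | add x y hx hy =>
      simp only [TensorProduct.tmul_add, map_add, smul_add, hx, hy]
      abel
end
end

section
/- Let (A, μ, Δ, ε, α_A, β_A, ψ_A, ω_A) be a counitary λ-infinitesimal BiHom-bialgebra and V a vector space with pairwise commuting maps α_V, β_V, ψ_V, ω_V. Define γ(a⊗(b⊗v)) = ab⊗β_V(v) + λ ε(b) α_A(a)⊗β_V(v) and ρ(a⊗v) = a₁⊗a₂⊗ψ_V(v). Then (A⊗V, γ, ρ, α_A⊗α_V, β_A⊗β_V, ψ_A⊗ψ_V, ω_A⊗ω_V) is a left λ-infBH-Hopf module. -/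
open TensorProduct

noncomputable section

variable (K : Type*) [Field K] (A : Type*) [AddCommGroup A] [Module K A]
variable (M : Type*) [AddCommGroup M] [Module K M]

lemma aux1 {K : Type*} [Field K] {P Q W : Type*} [AddCommGroup P] [Module K P]
    [AddCommGroup Q] [Module K Q] [AddCommGroup W] [Module K W] (w : W) (t : P ⊗[K] Q) :
    (TensorProduct.assoc K P Q W) (t ⊗ₜ[K] w)
      = TensorProduct.map LinearMap.id ((TensorProduct.mk K Q W).flip w) t := by
  induction t using TensorProduct.induction_on with
  | zero => simp
  | tmul p q => simp
  | add x y hx hy => simp [TensorProduct.add_tmul, hx, hy]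

lemma aux2 {K : Type*} [Field K] {P Q W : Type*} [AddCommGroup P] [Module K P]
    [AddCommGroup Q] [Module K Q] [AddCommGroup W] [Module K W] (p : P) (t : Q ⊗[K] W) :
    (TensorProduct.assoc K P Q W).symm (p ⊗ₜ[K] t)
      = TensorProduct.map (TensorProduct.mk K P Q p) LinearMap.id t := by
  induction t using TensorProduct.induction_on with
  | zero => simp
  | tmul q w => simp
  | add x y hx hy => simp [TensorProduct.tmul_add, hx, hy]

lemma map_map_apply {K : Type*} [Field K] {P Q R S T U : Type*} [AddCommGroup P] [Module K P]
    [AddCommGroup Q] [Module K Q] [AddCommGroup R] [Module K R] [AddCommGroup S] [Module K S]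
    [AddCommGroup T] [Module K T] [AddCommGroup U] [Module K U]
    (f : R →ₗ[K] T) (g : S →ₗ[K] U) (h : P →ₗ[K] R) (k : Q →ₗ[K] S) (x : P ⊗[K] Q) :
    TensorProduct.map f g (TensorProduct.map h k x)
      = TensorProduct.map (f ∘ₗ h) (g ∘ₗ k) x := by
  rw [TensorProduct.map_comp]; rfl

set_option maxHeartbeats 2000000 in
/-- for a counitary `λ`-infBH-bialgebra, `A ⊗ V` with
`γ(a ⊗ (b ⊗ v)) = ab ⊗ β_V(v) + λ ε(b) α(a) ⊗ β_V(v)` and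
`ρ(a ⊗ v) = a₁ ⊗ a₂ ⊗ ψ_V(v)` is a left `λ`-infBH-Hopf module. -/
theorem hopfModule_tensor_counitary
    (K : Type*) [Field K] (A : Type*) [AddCommGroup A] [Module K A]
    (V : Type*) [AddCommGroup V] [Module K V] (lam : K)
    (μ : A ⊗[K] A →ₗ[K] A) (Δ : A →ₗ[K] A ⊗[K] A) (α β ψ ω : A →ₗ[K] A)
    (ε : A →ₗ[K] K) (αV βV ψV ωV : V →ₗ[K] V)
    (hbi : IsInfBH K A lam μ Δ α β ψ ω)
    (hcu : IsCounitBH K A Δ α β ψ ω ε)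
    (h1 : αV ∘ₗ βV = βV ∘ₗ αV) (h2 : αV ∘ₗ ψV = ψV ∘ₗ αV)
    (h3 : αV ∘ₗ ωV = ωV ∘ₗ αV) (h4 : βV ∘ₗ ψV = ψV ∘ₗ βV)
    (h5 : βV ∘ₗ ωV = ωV ∘ₗ βV) (h6 : ψV ∘ₗ ωV = ωV ∘ₗ ψV) :
    -- `f(a ⊗ b) = ε(b) • α(a)`
    let f : A ⊗[K] A →ₗ[K] A :=
      α ∘ₗ (TensorProduct.rid K A).toLinearMap ∘ₗ TensorProduct.map LinearMap.id ε
    IsInfBHHopfModule K A (A ⊗[K] V) lam μ Δ α β ψ ω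
      ((TensorProduct.map μ βV + lam • TensorProduct.map f βV) ∘ₗ
        (TensorProduct.assoc K A A V).symm.toLinearMap)
      ((TensorProduct.assoc K A A V).toLinearMap ∘ₗ TensorProduct.map Δ ψV)
      (TensorProduct.map α αV) (TensorProduct.map β βV)
      (TensorProduct.map ψ ψV) (TensorProduct.map ω ωV) := by
  intro f
  obtain ⟨⟨hαβ, hαμ, hβμ, hassoc⟩, ⟨hψω, hψΔ, hωΔ, hcoassoc⟩, hαψ, hαω, hβψ, hβω,
    hαΔ, hβΔ, hψμ, hωμ, hcompat⟩ := hbi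
  obtain ⟨hεα, hεβ, hεψ, hεω, hεr, hεl⟩ := hcu
  have eα : ∀ x, ε (α x) = ε x := fun x => LinearMap.congr_fun hεα x
  have eβ : ∀ x, ε (β x) = ε x := fun x => LinearMap.congr_fun hεβ x
  have eψ : ∀ x, ε (ψ x) = ε x := fun x => LinearMap.congr_fun hεψ x
  have eω : ∀ x, ε (ω x) = ε x := fun x => LinearMap.congr_fun hεω x
  have wΔ : ∀ x, (TensorProduct.rid K A) (TensorProduct.map LinearMap.id ε (Δ x)) = ω x :=
    fun x => LinearMap.congr_fun hεr x
  have ψΔ : ∀ x, (TensorProduct.lid K A) (TensorProduct.map ε LinearMap.id (Δ x)) = ψ x :=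
    fun x => LinearMap.congr_fun hεl x
  have dα : ∀ x, Δ (α x) = TensorProduct.map α α (Δ x) :=
    fun x => (LinearMap.congr_fun hαΔ x).symm
  have dψ : ∀ x, Δ (ψ x) = TensorProduct.map ψ ψ (Δ x) :=
    fun x => (LinearMap.congr_fun hψΔ x).symm
  have dω : ∀ x, Δ (ω x) = TensorProduct.map ω ω (Δ x) :=
    fun x => (LinearMap.congr_fun hωΔ x).symm
  have mψ : ∀ x y, ψ (μ (x ⊗ₜ[K] y)) = μ (ψ x ⊗ₜ[K] ψ y) := fun x y => by
    have := LinearMap.congr_fun hψμ (x ⊗ₜ[K] y); simpa using this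
  have mω : ∀ x y, ω (μ (x ⊗ₜ[K] y)) = μ (ω x ⊗ₜ[K] ω y) := fun x y => by
    have := LinearMap.congr_fun hωμ (x ⊗ₜ[K] y); simpa using this
  have cα : ∀ x, α (β x) = β (α x) := fun x => LinearMap.congr_fun hαβ x
  have c1V : ∀ v, αV (βV v) = βV (αV v) := fun v => LinearMap.congr_fun h1 v
  have c4V : ∀ v, βV (ψV v) = ψV (βV v) := fun v => LinearMap.congr_fun h4 v
  have c6V : ∀ v, ψV (ωV v) = ωV (ψV v) := fun v => LinearMap.congr_fun h6 v
  -- derived: ε(ab) = -λ ε(a) ε(b)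
  have epsmul : ∀ a b : A, ε (μ (a ⊗ₜ[K] b)) = -(lam * (ε a * ε b)) := by
    intro a b
    have c1 : ∀ y : A ⊗[K] A,
        ε ((TensorProduct.rid K A) (TensorProduct.map LinearMap.id ε
          (TensorProduct.map μ β ((TensorProduct.assoc K A A A).symm (ω a ⊗ₜ[K] y)))))
        = ε (μ (ω a ⊗ₜ[K]
            ((TensorProduct.rid K A) (TensorProduct.map LinearMap.id ε y)))) := by
      intro y
      induction y using TensorProduct.induction_on with
      | zero => simp
      | tmul q r => simp [eβ, mul_comm]
      | add u v hu hv => simp [TensorProduct.tmul_add, hu, hv]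
    have c2 : ∀ x : A ⊗[K] A,
        ε ((TensorProduct.rid K A) (TensorProduct.map LinearMap.id ε
          (TensorProduct.map α μ ((TensorProduct.assoc K A A A) (x ⊗ₜ[K] ψ b)))))
        = ε (μ (((TensorProduct.lid K A) (TensorProduct.map ε LinearMap.id x)) ⊗ₜ[K] ψ b)) := by
      intro x
      induction x using TensorProduct.induction_on with
      | zero => simp
      | tmul p q => simp [eα, mul_comm, ← TensorProduct.smul_tmul']
      | add u v hu hv => simp [TensorProduct.add_tmul, hu, hv]
    have hE := congrArg (fun t => ε ((TensorProduct.rid K A)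
      (TensorProduct.map LinearMap.id ε t))) (hcompat a b)
    simp only [map_add, map_smul, smul_eq_mul] at hE
    rw [c1 (Δ b), c2 (Δ a), wΔ, wΔ, ψΔ] at hE
    rw [← mω, ← mψ, eω, eψ] at hE
    simp only [TensorProduct.map_tmul, TensorProduct.rid_tmul, map_smul, smul_eq_mul,
      LinearMap.id_coe, id_eq, eα, eβ, eψ, eω] at hE
    linear_combination -hE
  have hf0 : f = α ∘ₗ (TensorProduct.rid K A).toLinearMap ∘ₗ
      TensorProduct.map LinearMap.id ε := rfl
  have hf : ∀ (x y : A), f (x ⊗ₜ[K] y) = ε y • α x := by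
    intro x y; rw [hf0]; simp
  have hγ : ∀ (a b : A) (v : V),
      ((TensorProduct.map μ βV + lam • TensorProduct.map f βV) ∘ₗ
        (TensorProduct.assoc K A A V).symm.toLinearMap) (a ⊗ₜ[K] (b ⊗ₜ[K] v))
      = μ (a ⊗ₜ[K] b) ⊗ₜ[K] βV v + (lam * ε b) • (α a ⊗ₜ[K] βV v) := by
    intro a b v
    simp [hf, TensorProduct.smul_tmul', smul_smul]
  have hρ : ∀ (c : A) (w : V),
      ((TensorProduct.assoc K A A V).toLinearMap ∘ₗ TensorProduct.map Δ ψV) (c ⊗ₜ[K] w)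
      = TensorProduct.map LinearMap.id ((TensorProduct.mk K A V).flip (ψV w)) (Δ c) := by
    intro c w; simp [aux1]
  unfold IsInfBHHopfModule IsLeftBiHomModule IsLeftBiHomComodule
  refine ⟨⟨?_, ?_, ?_, ?_⟩, ⟨?_, ?_, ?_, ?_⟩, ?_, ?_, ?_, ?_, ?_⟩
  · rw [← TensorProduct.map_comp, ← TensorProduct.map_comp, hαβ, h1]
  · intro a m
    induction m using TensorProduct.induction_on with
    | zero => simp
    | tmul b v => simp [hγ, hαμ, eα, c1V]
    | add x y hx hy => simp only [TensorProduct.tmul_add, map_add, hx, hy]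
  · intro a m
    induction m using TensorProduct.induction_on with
    | zero => simp
    | tmul b v => simp [hγ, hβμ, eβ, cα]
    | add x y hx hy => simp only [TensorProduct.tmul_add, map_add, hx, hy]
  · intro a a' m
    induction m using TensorProduct.induction_on with
    | zero => simp
    | tmul b v =>
      simp only [TensorProduct.map_tmul, hγ, TensorProduct.tmul_add, TensorProduct.tmul_smul,
        map_add, map_smul, hassoc, hαμ, eβ, eα, epsmul]
      module
    | add x y hx hy => simp only [TensorProduct.tmul_add, map_add, hx, hy]
  · rw [← TensorProduct.map_comp, ← TensorProduct.map_comp, hψω, h6]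
  · apply TensorProduct.ext'
    intro a v
    simp only [LinearMap.comp_apply, LinearEquiv.coe_coe, TensorProduct.map_tmul]
    rw [dψ]
    generalize Δ a = x
    induction x using TensorProduct.induction_on with
    | zero => simp
    | tmul p q => simp
    | add x y hx hy => simp only [TensorProduct.add_tmul, map_add, hx, hy]
  · apply TensorProduct.ext'
    intro a v
    simp only [LinearMap.comp_apply, LinearEquiv.coe_coe, TensorProduct.map_tmul]
    rw [dω]
    generalize Δ a = x
    induction x using TensorProduct.induction_on with
    | zero => simp
    | tmul p q => simp [c6V]
    | add x y hx hy => simp only [TensorProduct.add_tmul, map_add, hx, hy]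
  · apply TensorProduct.ext'
    intro a v
    have hx : (TensorProduct.assoc K A A A) (TensorProduct.map Δ ψ (Δ a))
        = TensorProduct.map ω Δ (Δ a) := LinearMap.congr_fun hcoassoc a
    have claimL : ∀ x : A ⊗[K] A,
        (TensorProduct.assoc K A A (A ⊗[K] V)) (TensorProduct.map Δ (TensorProduct.map ψ ψV)
          ((TensorProduct.assoc K A A V) (x ⊗ₜ[K] ψV v)))
        = TensorProduct.map LinearMap.id (TensorProduct.map LinearMap.id
            ((TensorProduct.mk K A V).flip (ψV (ψV v))))
          ((TensorProduct.assoc K A A A) (TensorProduct.map Δ ψ x)) := by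
      intro x
      induction x using TensorProduct.induction_on with
      | zero => simp
      | tmul p q =>
        simp only [TensorProduct.assoc_tmul, TensorProduct.map_tmul]
        generalize Δ p = y
        induction y using TensorProduct.induction_on with
        | zero => simp
        | tmul y1 y2 => simp
        | add s t hs ht => simp only [TensorProduct.add_tmul, map_add, hs, ht]
      | add x y hx hy => simp only [TensorProduct.add_tmul, map_add, hx, hy]
    have claimR : ∀ x : A ⊗[K] A,
        TensorProduct.map ω ((TensorProduct.assoc K A A V).toLinearMap ∘ₗ
            TensorProduct.map Δ ψV)
          ((TensorProduct.assoc K A A V) (x ⊗ₜ[K] ψV v))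
        = TensorProduct.map LinearMap.id (TensorProduct.map LinearMap.id
            ((TensorProduct.mk K A V).flip (ψV (ψV v))))
          (TensorProduct.map ω Δ x) := by
      intro x
      induction x using TensorProduct.induction_on with
      | zero => simp
      | tmul p q =>
        simp only [TensorProduct.assoc_tmul, TensorProduct.map_tmul, LinearMap.comp_apply,
          LinearEquiv.coe_coe, LinearMap.id_coe, id_eq]
        generalize Δ q = y
        induction y using TensorProduct.induction_on with
        | zero => simp
        | tmul y1 y2 => simp
        | add s t hs ht => simp only [TensorProduct.add_tmul, map_add, hs, ht, TensorProduct.tmul_add]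
      | add x y hx hy => simp only [TensorProduct.add_tmul, map_add, hx, hy]
    simp only [LinearMap.comp_apply, LinearEquiv.coe_coe, TensorProduct.map_tmul]
    rw [claimL (Δ a), claimR (Δ a), hx]
  · rw [← TensorProduct.map_comp, ← TensorProduct.map_comp, hαψ, h2]
  · rw [← TensorProduct.map_comp, ← TensorProduct.map_comp, hαω, h3]
  · rw [← TensorProduct.map_comp, ← TensorProduct.map_comp, hβψ, h4]
  · rw [← TensorProduct.map_comp, ← TensorProduct.map_comp, hβω, h5]
  · intro a m
    induction m using TensorProduct.induction_on with
    | zero => simp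
    | add x y hx hy =>
      simp only [TensorProduct.tmul_add, map_add, smul_add, hx, hy]
      abel
    | tmul b v =>
      have hgb : (TensorProduct.map β βV) ∘ₗ ((TensorProduct.mk K A V).flip (ψV v))
          = ((TensorProduct.mk K A V).flip (ψV (βV v))) ∘ₗ β := by
        apply LinearMap.ext; intro c
        simp [c4V]
      have hsplit : ((TensorProduct.map μ βV + lam • TensorProduct.map f βV) ∘ₗ
            (TensorProduct.assoc K A A V).symm.toLinearMap) ∘ₗ
            ((TensorProduct.mk K A (A ⊗[K] V)).flip (ψ b ⊗ₜ[K] ψV v))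
          = (((TensorProduct.mk K A V).flip (ψV (βV v))) ∘ₗ μ ∘ₗ
              ((TensorProduct.mk K A A).flip (ψ b)))
            + (lam * ε b) • (((TensorProduct.mk K A V).flip (ψV (βV v))) ∘ₗ α) := by
        apply LinearMap.ext; intro c
        simp only [LinearMap.comp_apply, LinearMap.add_apply, LinearMap.smul_apply,
          LinearMap.flip_apply, TensorProduct.mk_apply, hγ, eψ, c4V]
      simp only [TensorProduct.map_tmul, hγ, hρ, map_add, map_smul, dα]
      rw [hcompat a b]
      simp only [aux1, aux2, map_map_apply, LinearMap.comp_id, LinearMap.id_comp,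
        map_add, map_smul, TensorProduct.map_tmul, LinearMap.flip_apply, TensorProduct.mk_apply, LinearMap.id_apply]
      rw [hgb, hsplit]
      simp only [TensorProduct.map_add_right, TensorProduct.map_smul_right,
        LinearMap.add_apply, LinearMap.smul_apply, c4V]
      abel
end
end

section
/- Let (A, μ, 1, α, β) be a unitary BiHom-associative algebra with α, β bijective, ψ, ω : A → A pairwise commuting with α, β, multiplicative with respect to μ, fixing 1, and r = r¹⊗r² ∈ A⊗A invariant under α⊗α, β⊗β, ψ⊗ψ, ω⊗ω. Define Δ_r(a) = ωα⁻¹(a)r¹⊗β(r²) − α(r¹)⊗r²ψβ⁻¹(a) − λ(ω(a)⊗1). Then Δ_r satisfies Δ_r(ab) = ω(a)(Δ_r(b))₁⊗β((Δ_r(b))₂) + α((Δ_r(a))₁)⊗(Δ_r(a))₂ψ(b) + λ αω(a)⊗βψ(b), i.e. Δ_r is a λ-BiHom-derivation. -/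
open TensorProduct

noncomputable section

variable (K : Type*) [Field K] (A : Type*) [AddCommGroup A] [Module K A]
variable (M : Type*) [AddCommGroup M] [Module K M]

section RDefs

variable (K : Type*) [Field K] (A : Type*) [AddCommGroup A] [Module K A]

/-- `Δ_r(a) = ωα⁻¹(a)r¹ ⊗ β(r²) − α(r¹) ⊗ r²ψβ⁻¹(a) − λ (ω(a) ⊗ 1)`. -/
def DeltaR (lam : K) (μ : A ⊗[K] A →ₗ[K] A) (α β : A ≃ₗ[K] A) (ψ ω : A →ₗ[K] A)
    (e : A) (r : A ⊗[K] A) : A →ₗ[K] A ⊗[K] A :=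
  (TensorProduct.map μ β.toLinearMap ∘ₗ (TensorProduct.assoc K A A A).symm.toLinearMap
      ∘ₗ ((TensorProduct.mk K A (A ⊗[K] A)).flip r) ∘ₗ ω ∘ₗ α.symm.toLinearMap)
  - (TensorProduct.map α.toLinearMap μ ∘ₗ (TensorProduct.assoc K A A A).toLinearMap
      ∘ₗ (TensorProduct.mk K (A ⊗[K] A) A r) ∘ₗ ψ ∘ₗ β.symm.toLinearMap)
  - lam • (((TensorProduct.mk K A A).flip e) ∘ₗ ω)

/-- `r₁₂r₂₃ = α(r¹) ⊗ r²r̄¹ ⊗ β(r̄²)` (with `r̄ = r`). -/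
def R12R23 (μ : A ⊗[K] A →ₗ[K] A) (α β : A →ₗ[K] A) (r : A ⊗[K] A) :
    A ⊗[K] (A ⊗[K] A) :=
  (TensorProduct.map α
      (TensorProduct.map μ β ∘ₗ (TensorProduct.assoc K A A A).symm.toLinearMap)
    ∘ₗ (TensorProduct.assoc K A A (A ⊗[K] A)).toLinearMap) (r ⊗ₜ[K] r)

/-- `r₁₃r₁₂ = ω(r¹)r̄¹ ⊗ β(r̄²) ⊗ αψ(r²)` (with `r̄ = r`). -/
def R13R12 (μ : A ⊗[K] A →ₗ[K] A) (α β ψ ω : A →ₗ[K] A) (r : A ⊗[K] A) :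
    A ⊗[K] (A ⊗[K] A) :=
  (TensorProduct.map (μ ∘ₗ TensorProduct.map ω LinearMap.id)
      ((TensorProduct.comm K A A).toLinearMap ∘ₗ TensorProduct.map (α ∘ₗ ψ) β)
    ∘ₗ (TensorProduct.tensorTensorTensorComm K A A A A).toLinearMap) (r ⊗ₜ[K] r)

/-- `r₂₃r₁₃ = βω(r¹) ⊗ α(r̄¹) ⊗ r̄²ψ(r²)` (with `r̄ = r`). -/
def R23R13 (μ : A ⊗[K] A →ₗ[K] A) (α β ψ ω : A →ₗ[K] A) (r : A ⊗[K] A) :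
    A ⊗[K] (A ⊗[K] A) :=
  ((TensorProduct.assoc K A A A).toLinearMap
    ∘ₗ TensorProduct.map (TensorProduct.map (β ∘ₗ ω) α)
      (μ ∘ₗ TensorProduct.map LinearMap.id ψ ∘ₗ (TensorProduct.comm K A A).toLinearMap)
    ∘ₗ (TensorProduct.tensorTensorTensorComm K A A A A).toLinearMap) (r ⊗ₜ[K] r)

/-- `r₁₃ = ω(r¹) ⊗ 1 ⊗ ψ(r²)`. -/
def R13E (ψ ω : A →ₗ[K] A) (e : A) (r : A ⊗[K] A) : A ⊗[K] (A ⊗[K] A) :=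
  TensorProduct.map ω ((TensorProduct.mk K A A e) ∘ₗ ψ) r

/-- `r₁₂ = r ⊗ 1`. -/
def R12E (e : A) (r : A ⊗[K] A) : A ⊗[K] (A ⊗[K] A) :=
  TensorProduct.map LinearMap.id ((TensorProduct.mk K A A).flip e) r

/-- `r₂₃ = 1 ⊗ r`. -/
def R23E (e : A) (r : A ⊗[K] A) : A ⊗[K] (A ⊗[K] A) := e ⊗ₜ[K] r

end RDefs


section AuxT

variable {K : Type*} [Field K] {A : Type*} [AddCommGroup A] [Module K A]

/-- `T1L μ β x r' = μ(x ⊗ r'¹) ⊗ β r'²`, as a linear map in `r'`. -/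
def T1L (μ : A ⊗[K] A →ₗ[K] A) (β : A →ₗ[K] A) (x : A) :
    A ⊗[K] A →ₗ[K] A ⊗[K] A :=
  TensorProduct.map μ β ∘ₗ (TensorProduct.assoc K A A A).symm.toLinearMap
    ∘ₗ TensorProduct.mk K A (A ⊗[K] A) x

/-- `T2L μ α x r' = α r'¹ ⊗ μ(r'² ⊗ x)`, as a linear map in `r'`. -/
def T2L (μ : A ⊗[K] A →ₗ[K] A) (α : A →ₗ[K] A) (x : A) :
    A ⊗[K] A →ₗ[K] A ⊗[K] A :=
  TensorProduct.map α μ ∘ₗ (TensorProduct.assoc K A A A).toLinearMap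
    ∘ₗ (TensorProduct.mk K (A ⊗[K] A) A).flip x

@[simp] lemma T1L_tmul (μ : A ⊗[K] A →ₗ[K] A) (β : A →ₗ[K] A) (x u v : A) :
    T1L μ β x (u ⊗ₜ[K] v) = μ (x ⊗ₜ[K] u) ⊗ₜ[K] β v := by
  simp [T1L]

@[simp] lemma T2L_tmul (μ : A ⊗[K] A →ₗ[K] A) (α : A →ₗ[K] A) (x u v : A) :
    T2L μ α x (u ⊗ₜ[K] v) = α u ⊗ₜ[K] μ (v ⊗ₜ[K] x) := by
  simp [T2L]

lemma map_T1L (μ : A ⊗[K] A →ₗ[K] A) (β φ : A →ₗ[K] A)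
    (hm : ∀ u v : A, φ (μ (u ⊗ₜ[K] v)) = μ (φ u ⊗ₜ[K] φ v))
    (hc : ∀ v : A, φ (β v) = β (φ v)) (x : A) (r' : A ⊗[K] A) :
    TensorProduct.map φ φ (T1L μ β x r')
      = T1L μ β (φ x) (TensorProduct.map φ φ r') := by
  induction r' using TensorProduct.induction_on with
  | zero => simp
  | tmul u v => simp [hm, hc]
  | add p q hp hq => simp [map_add, hp, hq]

lemma map_T2L (μ : A ⊗[K] A →ₗ[K] A) (α φ : A →ₗ[K] A)
    (hm : ∀ u v : A, φ (μ (u ⊗ₜ[K] v)) = μ (φ u ⊗ₜ[K] φ v))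
    (hc : ∀ v : A, φ (α v) = α (φ v)) (x : A) (r' : A ⊗[K] A) :
    TensorProduct.map φ φ (T2L μ α x r')
      = T2L μ α (φ x) (TensorProduct.map φ φ r') := by
  induction r' using TensorProduct.induction_on with
  | zero => simp
  | tmul u v => simp [hm, hc]
  | add p q hp hq => simp [map_add, hp, hq]

lemma deltaR_apply (lam : K) (μ : A ⊗[K] A →ₗ[K] A) (α β : A ≃ₗ[K] A)
    (ψ ω : A →ₗ[K] A) (e : A) (r : A ⊗[K] A) (a : A) :
    DeltaR K A lam μ α β ψ ω e r a
      = T1L μ β.toLinearMap (ω (α.symm a)) r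
        - T2L μ α.toLinearMap (ψ (β.symm a)) r
        - lam • (ω a ⊗ₜ[K] e) := by
  simp [DeltaR, T1L, T2L]

end AuxT

/-- `Δ_r` is a `λ`-BiHom-derivation. -/
theorem deltaR_is_biHom_derivation
    (K : Type*) [Field K] (A : Type*) [AddCommGroup A] [Module K A]
    (lam : K) (μ : A ⊗[K] A →ₗ[K] A) (α β : A ≃ₗ[K] A) (ψ ω : A →ₗ[K] A)
    (e : A) (r : A ⊗[K] A)
    (halg : BiHomAssoc K A μ α.toLinearMap β.toLinearMap)
    (hunit : IsUnitBH K A μ α.toLinearMap β.toLinearMap ψ ω e)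
    -- Eq. (12.1)
    (hαψ : α.toLinearMap ∘ₗ ψ = ψ ∘ₗ α.toLinearMap)
    (hαω : α.toLinearMap ∘ₗ ω = ω ∘ₗ α.toLinearMap)
    (hβψ : β.toLinearMap ∘ₗ ψ = ψ ∘ₗ β.toLinearMap)
    (hβω : β.toLinearMap ∘ₗ ω = ω ∘ₗ β.toLinearMap)
    (hψω : ψ ∘ₗ ω = ω ∘ₗ ψ)
    -- Eq. (12.3)
    (hψm : ψ ∘ₗ μ = μ ∘ₗ TensorProduct.map ψ ψ)
    (hωm : ω ∘ₗ μ = μ ∘ₗ TensorProduct.map ω ω)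
    -- `r` is `α, β, ψ, ω`-invariant
    (hrα : TensorProduct.map α.toLinearMap α.toLinearMap r = r)
    (hrβ : TensorProduct.map β.toLinearMap β.toLinearMap r = r)
    (hrψ : TensorProduct.map ψ ψ r = r)
    (hrω : TensorProduct.map ω ω r = r) :
    -- `Δ_r` commutes with the structure maps (Eq. (12.9)) and satisfies
    -- the `λ`-BiHom-derivation identity (Eq. (12.10))
    (TensorProduct.map α.toLinearMap α.toLinearMap ∘ₗ DeltaR K A lam μ α β ψ ω e r
      = DeltaR K A lam μ α β ψ ω e r ∘ₗ α.toLinearMap) ∧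
    (TensorProduct.map β.toLinearMap β.toLinearMap ∘ₗ DeltaR K A lam μ α β ψ ω e r
      = DeltaR K A lam μ α β ψ ω e r ∘ₗ β.toLinearMap) ∧
    (TensorProduct.map ψ ψ ∘ₗ DeltaR K A lam μ α β ψ ω e r
      = DeltaR K A lam μ α β ψ ω e r ∘ₗ ψ) ∧
    (TensorProduct.map ω ω ∘ₗ DeltaR K A lam μ α β ψ ω e r
      = DeltaR K A lam μ α β ψ ω e r ∘ₗ ω) ∧
    InfBHCompat K A lam μ (DeltaR K A lam μ α β ψ ω e r)
      α.toLinearMap β.toLinearMap ψ ω := by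
  obtain ⟨hαβ, hαm, hβm, hassoc⟩ := halg
  obtain ⟨hαe, hβe, hψe, hωe, hre, hle⟩ := hunit
  have hαβ' : ∀ x : A, α (β x) = β (α x) := fun x => LinearMap.congr_fun hαβ x
  have hαψ' : ∀ x : A, α (ψ x) = ψ (α x) := fun x => LinearMap.congr_fun hαψ x
  have hαω' : ∀ x : A, α (ω x) = ω (α x) := fun x => LinearMap.congr_fun hαω x
  have hβψ' : ∀ x : A, β (ψ x) = ψ (β x) := fun x => LinearMap.congr_fun hβψ x
  have hβω' : ∀ x : A, β (ω x) = ω (β x) := fun x => LinearMap.congr_fun hβω x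
  have hψω' : ∀ x : A, ψ (ω x) = ω (ψ x) := fun x => LinearMap.congr_fun hψω x
  have hψm' : ∀ u v : A, ψ (μ (u ⊗ₜ[K] v)) = μ (ψ u ⊗ₜ[K] ψ v) := fun u v => by
    simpa using LinearMap.congr_fun hψm (u ⊗ₜ[K] v)
  have hωm' : ∀ u v : A, ω (μ (u ⊗ₜ[K] v)) = μ (ω u ⊗ₜ[K] ω v) := fun u v => by
    simpa using LinearMap.congr_fun hωm (u ⊗ₜ[K] v)
  -- commutations with inverses
  have hsαβ : ∀ x : A, α (β.symm x) = β.symm (α x) := fun x =>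
    β.injective (by rw [β.apply_symm_apply, ← hαβ' , β.apply_symm_apply])
  have hsβα : ∀ x : A, β (α.symm x) = α.symm (β x) := fun x =>
    α.injective (by rw [α.apply_symm_apply, hαβ', α.apply_symm_apply])
  have hsαω : ∀ x : A, ω (α.symm x) = α.symm (ω x) := fun x =>
    α.injective (by rw [α.apply_symm_apply, hαω', α.apply_symm_apply])
  have hsαψ : ∀ x : A, ψ (α.symm x) = α.symm (ψ x) := fun x =>
    α.injective (by rw [α.apply_symm_apply, hαψ', α.apply_symm_apply])
  have hsβω : ∀ x : A, ω (β.symm x) = β.symm (ω x) := fun x =>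
    β.injective (by rw [β.apply_symm_apply, hβω', β.apply_symm_apply])
  have hsβψ : ∀ x : A, ψ (β.symm x) = β.symm (ψ x) := fun x =>
    β.injective (by rw [β.apply_symm_apply, hβψ', β.apply_symm_apply])
  have hsαm : ∀ u v : A, α.symm (μ (u ⊗ₜ[K] v)) = μ (α.symm u ⊗ₜ[K] α.symm v) := by
    intro u v
    have h := hαm (α.symm u) (α.symm v)
    simp only [LinearEquiv.coe_coe, α.apply_symm_apply] at h
    exact (LinearEquiv.symm_apply_eq α).2 h.symm
  have hsβm : ∀ u v : A, β.symm (μ (u ⊗ₜ[K] v)) = μ (β.symm u ⊗ₜ[K] β.symm v) := by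
    intro u v
    have h := hβm (β.symm u) (β.symm v)
    simp only [LinearEquiv.coe_coe, β.apply_symm_apply] at h
    exact (LinearEquiv.symm_apply_eq β).2 h.symm
  have hαmE : ∀ u v : A, α (μ (u ⊗ₜ[K] v)) = μ (α u ⊗ₜ[K] α v) := fun u v => hαm u v
  have hβmE : ∀ u v : A, β (μ (u ⊗ₜ[K] v)) = μ (β u ⊗ₜ[K] β v) := fun u v => hβm u v
  have hassocE : ∀ x y z : A, μ (α x ⊗ₜ[K] μ (y ⊗ₜ[K] z)) = μ (μ (x ⊗ₜ[K] y) ⊗ₜ[K] β z) :=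
    fun x y z => hassoc x y z
  refine ⟨?_, ?_, ?_, ?_, ?_⟩
  · ext a
    simp only [LinearMap.comp_apply, deltaR_apply]
    rw [map_sub, map_sub, map_smul, TensorProduct.map_tmul]
    rw [map_T1L μ β.toLinearMap α.toLinearMap hαm hαβ', hrα,
        map_T2L μ α.toLinearMap α.toLinearMap hαm (fun v => rfl), hrα]
    simp [T1L, T2L, hαω', hsβα, hsαβ, hαψ', hαe, α.symm_apply_apply]
  · ext a
    simp only [LinearMap.comp_apply, deltaR_apply]
    rw [map_sub, map_sub, map_smul, TensorProduct.map_tmul]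
    rw [map_T1L μ β.toLinearMap β.toLinearMap hβm (fun v => rfl), hrβ,
        map_T2L μ α.toLinearMap β.toLinearMap hβm (fun v => (hαβ' v).symm), hrβ]
    simp [T1L, T2L, hβω', hsαβ, hsβα, hβψ', hβe, β.symm_apply_apply]
  · ext a
    simp only [LinearMap.comp_apply, deltaR_apply]
    rw [map_sub, map_sub, map_smul, TensorProduct.map_tmul]
    rw [map_T1L μ β.toLinearMap ψ hψm' (fun v => (hβψ' v).symm), hrψ,
        map_T2L μ α.toLinearMap ψ hψm' (fun v => (hαψ' v).symm), hrψ]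
    simp [T1L, T2L, hψω', hsαψ, hsβψ, hsαω, hsβω, hψe]
  · ext a
    simp only [LinearMap.comp_apply, deltaR_apply]
    rw [map_sub, map_sub, map_smul, TensorProduct.map_tmul]
    rw [map_T1L μ β.toLinearMap ω hωm' (fun v => (hβω' v).symm), hrω,
        map_T2L μ α.toLinearMap ω hωm' (fun v => (hαω' v).symm), hrω]
    simp [T1L, T2L, hψω', hsαω, hsβω, hsαψ, hsβψ, hωe]
  · intro a b
    have key1 : ∀ r' : A ⊗[K] A,
        T1L μ β.toLinearMap (ω a) (T1L μ β.toLinearMap (ω (α.symm b)) r')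
          = T1L μ β.toLinearMap (ω (α.symm (μ (a ⊗ₜ[K] b))))
              (TensorProduct.map β.toLinearMap β.toLinearMap r') := by
      intro r'
      induction r' using TensorProduct.induction_on with
      | zero => simp
      | tmul u v =>
          simp only [T1L_tmul, TensorProduct.map_tmul, LinearEquiv.coe_coe]
          congr 1
          have h1 : ω a = α (ω (α.symm a)) := by rw [hαω', α.apply_symm_apply]
          rw [h1, hassocE]
          congr 2
          rw [← hωm', ← hsαm]
      | add p q hp hq => simp [map_add, hp, hq]
    have key2 : ∀ r' : A ⊗[K] A,
        T2L μ α.toLinearMap (ψ b) (T2L μ α.toLinearMap (ψ (β.symm a)) r')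
          = T2L μ α.toLinearMap (ψ (β.symm (μ (a ⊗ₜ[K] b))))
              (TensorProduct.map α.toLinearMap α.toLinearMap r') := by
      intro r'
      induction r' using TensorProduct.induction_on with
      | zero => simp
      | tmul u v =>
          simp only [T2L_tmul, TensorProduct.map_tmul, LinearEquiv.coe_coe]
          congr 1
          have h1 : ψ b = β (ψ (β.symm b)) := by rw [hβψ', β.apply_symm_apply]
          rw [h1, ← hassocE]
          congr 2
          rw [← hψm', ← hsβm]
      | add p q hp hq => simp [map_add, hp, hq]
    have key3 : ∀ r' : A ⊗[K] A,
        T2L μ α.toLinearMap (ψ b) (T1L μ β.toLinearMap (ω (α.symm a)) r')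
          = T1L μ β.toLinearMap (ω a) (T2L μ α.toLinearMap (ψ (β.symm b)) r') := by
      intro r'
      induction r' using TensorProduct.induction_on with
      | zero => simp
      | tmul u v =>
          simp only [T1L_tmul, T2L_tmul, LinearEquiv.coe_coe]
          rw [hαmE, hβmE, hαω', α.apply_symm_apply, hβψ', β.apply_symm_apply]
      | add p q hp hq => simp [map_add, hp, hq]
    have hT1e : T1L μ β.toLinearMap (ω a) (ω b ⊗ₜ[K] e) = ω (μ (a ⊗ₜ[K] b)) ⊗ₜ[K] e := by
      rw [T1L_tmul, hβe, ← hωm']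
    have hT2e : T2L μ α.toLinearMap (ψ b) (ω a ⊗ₜ[K] e)
        = α.toLinearMap (ω a) ⊗ₜ[K] β.toLinearMap (ψ b) := by
      rw [T2L_tmul, hle]
    have hΔ : ∀ x : A, DeltaR K A lam μ α β ψ ω e r x
        = T1L μ β.toLinearMap (ω (α.symm x)) r
          - T2L μ α.toLinearMap (ψ (β.symm x)) r - lam • (ω x ⊗ₜ[K] e) :=
      deltaR_apply lam μ α β ψ ω e r
    have goalT1 : TensorProduct.map μ β.toLinearMap
        ((TensorProduct.assoc K A A A).symm
          (ω a ⊗ₜ[K] DeltaR K A lam μ α β ψ ω e r b))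
        = T1L μ β.toLinearMap (ω a) (DeltaR K A lam μ α β ψ ω e r b) := rfl
    have goalT2 : TensorProduct.map α.toLinearMap μ
        ((TensorProduct.assoc K A A A)
          (DeltaR K A lam μ α β ψ ω e r a ⊗ₜ[K] ψ b))
        = T2L μ α.toLinearMap (ψ b) (DeltaR K A lam μ α β ψ ω e r a) := rfl
    rw [goalT1, goalT2, hΔ, hΔ, hΔ]
    rw [map_sub, map_sub, map_smul, map_sub, map_sub, map_smul]
    rw [key1 r, key2 r, key3 r, hrα, hrβ, hT1e, hT2e]
    module
end
end
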